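/- arXiv:1305.1109 — 3 statements merged into one kernel-verified Lean document; each statement's English description precedes it below -/
import Mathlib

section
/- Let T₀ < 0 < T₁ and let w : [T₀,T₁] → ℝ^ℤ be a C¹ solution of the cooperative linear system. Let k ≥ 1 and suppose that w_0(0) ≠ 0, w_1(0) = ⋯ = w_k(0) = 0, and w_{k+1}(0) ≠ 0. Then for each j = 1, …, k, setting j* = min{j, k+1−j}, one has w_j(t) = d_j·t^{j*} + o(t^{j*}) as t → 0, where: d_j = w_0(0)·(∏_{i=1}^{j} a_i(0))/j! if 2j ≤ k; d_j = w_{k+1}(0)·(∏_{i=j}^{k} b_i(0))/(k+1−j)! if 2j ≥ k+2; and d_j = (w_0(0)·∏_{i=1}^{j} a_i(0) + w_{k+1}(0)·∏_{i=j}^{k} b_i(0))/j! if 2j = k+1. In particular, d_j ≠ 0 and d_j has the same sign as w_0(0) when 2j ≤ k, d_j ≠ 0 and d_j has the same sign as w_{k+1}(0) when 2j ≥ k+2, and if moreover w_0(0)·w_{k+1}(0) > 0, then d_j ≠ 0 and d_j has the same sign as w_0(0) for every j = 1, …, k. -/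
open Set Filter Topology

/-- `w` has a zero at position `j`: the graph of `i ↦ w i` crosses `0` in `[j, j+1)`. -/
def zeroAt (w : ℤ → ℝ) (j : ℤ) : Prop :=
  ∃ x : ℝ, 0 ≤ x ∧ x < 1 ∧ w j + (w (j + 1) - w j) * x = 0

/-- The zero of `w` at `j` is singular. -/
def singZeroAt (w : ℤ → ℝ) (j : ℤ) : Prop :=
  w j = 0 ∧ (w (j + 1) = 0 ∨ w (j - 1) = 0 ∨ w (j - 1) * w (j + 1) > 0)

/-- The number of positions `j` with `m ≤ j ≤ n - 1` at which `w` has a zero. -/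
noncomputable def zCount (w : ℤ → ℝ) (m n : ℤ) : ℕ :=
  Set.ncard {j : ℤ | m ≤ j ∧ j < n ∧ zeroAt w j}

/-- A configuration `w : ℤ → ℝ` has sub-exponential growth:
`limsup_{|j| → ∞} (log |w j|)/|j| ≤ 0`. -/
def SubExp (w : ℤ → ℝ) : Prop :=
  ∀ ε : ℝ, 0 < ε → ∀ᶠ j in (Filter.cofinite : Filter ℤ), Real.log |w j| ≤ ε * |(j : ℝ)|

open Asymptotics

lemma integ_bound {S : Set ℝ} (hS : Convex ℝ S) (h0 : (0:ℝ) ∈ S) {f g : ℝ → ℝ} {m : ℕ} {C : ℝ}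
    (hC : 0 ≤ C) (hf0 : f 0 = 0)
    (hd : ∀ t ∈ S, HasDerivWithinAt f (g t) S t)
    (hg : ∀ᶠ t in 𝓝[S] (0:ℝ), |g t| ≤ C * |t| ^ m) :
    ∀ᶠ t in 𝓝[S] (0:ℝ), |f t| ≤ C * |t| ^ (m + 1) := by
  rw [eventually_iff, Metric.mem_nhdsWithin_iff] at hg ⊢
  obtain ⟨r, hr, hgr⟩ := hg
  refine ⟨r, hr, fun t ht => ?_⟩
  obtain ⟨htr, htS⟩ := ht
  simp only [Metric.mem_ball, Real.dist_eq, sub_zero] at htr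
  have hK : Set.uIcc 0 t ⊆ S := hS.ordConnected.uIcc_subset h0 htS
  have habs : ∀ x ∈ Set.uIcc 0 t, |x| ≤ |t| := by
    intro x hx
    rw [Set.mem_uIcc] at hx
    rcases hx with ⟨h1, h2⟩ | ⟨h1, h2⟩
    · rw [abs_of_nonneg h1]; exact h2.trans (le_abs_self t)
    · rw [abs_of_nonpos h2]; exact (neg_le_neg h1).trans (neg_le_abs t)
  have key := Convex.norm_image_sub_le_of_norm_hasDerivWithin_le
    (f := f) (f' := g) (s := Set.uIcc 0 t) (C := C * |t| ^ m)
    (fun x hx => (hd x (hK hx)).mono hK)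
    (fun x hx => by
      rw [Real.norm_eq_abs]
      refine le_trans (hgr ⟨?_, hK hx⟩) ?_
      · simp only [Metric.mem_ball, Real.dist_eq, sub_zero]
        exact lt_of_le_of_lt (habs x hx) htr
      · exact mul_le_mul_of_nonneg_left (pow_le_pow_left₀ (abs_nonneg _) (habs x hx) m) hC)
    (convex_uIcc 0 t) Set.left_mem_uIcc Set.right_mem_uIcc
  simp only [Real.norm_eq_abs, hf0, sub_zero] at key
  calc |f t| ≤ C * |t| ^ m * |t| := key
    _ = C * |t| ^ (m + 1) := by ring

lemma oStep {S : Set ℝ} (hS : Convex ℝ S) (h0 : (0:ℝ) ∈ S) {f g : ℝ → ℝ} {m : ℕ} {α : ℝ}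
    (hf0 : f 0 = 0) (hd : ∀ t ∈ S, HasDerivWithinAt f (g t) S t)
    (hg : (fun t => g t - α * t ^ m) =o[𝓝[S] (0:ℝ)] fun t => t ^ m) :
    (fun t => f t - α / (m + 1 : ℝ) * t ^ (m + 1)) =o[𝓝[S] (0:ℝ)] fun t => t ^ (m + 1) := by
  rw [Asymptotics.isLittleO_iff] at hg ⊢
  intro ε hε
  have hd' : ∀ t ∈ S, HasDerivWithinAt (fun t => f t - α / (m + 1 : ℝ) * t ^ (m + 1))
      (g t - α * t ^ m) S t := by
    intro t ht
    have h2 : HasDerivWithinAt (fun t : ℝ => α / (m + 1 : ℝ) * t ^ (m + 1))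
        (α * t ^ m) S t := by
      have := (HasDerivAt.const_mul (α / (m + 1 : ℝ)) (hasDerivAt_pow (m+1) t)).hasDerivWithinAt
        (s := S)
      refine this.congr_deriv ?_
      rw [Nat.add_sub_cancel]
      push_cast
      field_simp
    exact (hd t ht).sub h2
  have hb := integ_bound hS h0 hε.le (f := fun t => f t - α / (m + 1 : ℝ) * t ^ (m + 1))
    (g := fun t => g t - α * t ^ m) (m := m)
    (by simp [hf0]) hd'
    (by filter_upwards [hg hε] with t ht
        simpa [Real.norm_eq_abs, abs_pow] using ht)
  filter_upwards [hb] with t ht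
  simpa [Real.norm_eq_abs, abs_pow] using ht

lemma OStep {S : Set ℝ} (hS : Convex ℝ S) (h0 : (0:ℝ) ∈ S) {f g : ℝ → ℝ} {m : ℕ}
    (hf0 : f 0 = 0) (hd : ∀ t ∈ S, HasDerivWithinAt f (g t) S t)
    (hg : g =O[𝓝[S] (0:ℝ)] fun t => t ^ m) :
    f =O[𝓝[S] (0:ℝ)] fun t => t ^ (m + 1) := by
  rw [Asymptotics.isBigO_iff] at hg ⊢
  obtain ⟨C, hC⟩ := hg
  refine ⟨|C|, ?_⟩
  have hb := integ_bound hS h0 (abs_nonneg C) hf0 hd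
    (g := g) (m := m)
    (by filter_upwards [hC] with t ht
        rw [Real.norm_eq_abs, Real.norm_eq_abs, abs_pow] at ht
        exact ht.trans (mul_le_mul_of_nonneg_right (le_abs_self C) (by positivity)))
  filter_upwards [hb] with t ht
  simpa [Real.norm_eq_abs, abs_pow] using ht

lemma mulExpand {l : Filter ℝ} {φ f g : ℝ → ℝ} {φ0 d : ℝ}
    (hφ : Tendsto φ l (𝓝 φ0)) (hf : (fun t => f t - d * g t) =o[l] g) :
    (fun t => φ t * f t - φ0 * d * g t) =o[l] g := by
  have h1 : (fun t => φ t * (f t - d * g t)) =o[l] g := by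
    have := (hφ.isBigO_one ℝ).mul_isLittleO hf
    simpa using this
  have h2 : (fun t => (φ t - φ0) * (d * g t)) =o[l] g := by
    have ho : (fun t => φ t - φ0) =o[l] (fun _ => (1:ℝ)) := by
      rw [isLittleO_one_iff]
      simpa using hφ.sub_const φ0
    have := ho.mul_isBigO ((isBigO_refl g l).const_mul_left d)
    simpa using this
  exact (h1.add h2).congr (fun t => by ring) (fun t => rfl)

lemma prodIccSplit {M : Type*} [CommMonoid M] (f : ℕ → M) {j k : ℕ} (h : j ≤ k) :
    ∏ i ∈ Finset.Icc j k, f i = f j * ∏ i ∈ Finset.Icc (j+1) k, f i := by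
  rw [← Finset.Ico_add_one_right_eq_Icc, Finset.prod_eq_prod_Ico_succ_bot (by omega), Finset.Ico_add_one_right_eq_Icc]

noncomputable def Dcoef (a b : ℤ → ℝ → ℝ) (w : ℝ → ℤ → ℝ) (k : ℕ) (j : ℕ) : ℝ :=
  if 2*j ≤ k then
    w 0 0 * (∏ i ∈ Finset.Icc 1 j, a (i:ℤ) 0) / (Nat.factorial j : ℝ)
  else if k+2 ≤ 2*j then
    w 0 ((k:ℤ)+1) * (∏ i ∈ Finset.Icc j k, b (i:ℤ) 0) / (Nat.factorial (k+1-j) : ℝ)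
  else
    (w 0 0 * (∏ i ∈ Finset.Icc 1 j, a (i:ℤ) 0)
      + w 0 ((k:ℤ)+1) * (∏ i ∈ Finset.Icc j k, b (i:ℤ) 0)) / (Nat.factorial j : ℝ)

open Asymptotics in
theorem taylor_main
    (T₀ T₁ δ : ℝ) (hT : T₀ < T₁) (hδ : 0 < δ)
    (a b c : ℤ → ℝ → ℝ) (w : ℝ → ℤ → ℝ)
    (hacont : ∀ j : ℤ, ContinuousOn (a j) (Set.Icc T₀ T₁))
    (hbcont : ∀ j : ℤ, ContinuousOn (b j) (Set.Icc T₀ T₁))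
    (hccont : ∀ j : ℤ, ContinuousOn (c j) (Set.Icc T₀ T₁))
    (hbound : ∃ C : ℝ, ∀ j : ℤ, ∀ t ∈ Set.Icc T₀ T₁,
      |a j t| ≤ C ∧ |b j t| ≤ C ∧ |c j t| ≤ C)
    (hpos : ∀ j : ℤ, ∀ t ∈ Set.Icc T₀ T₁, δ ≤ a j t ∧ δ ≤ b j t)
    (hsol : ∀ j : ℤ, ∀ t ∈ Set.Icc T₀ T₁,
      HasDerivWithinAt (fun s => w s j)
        (a j t * w t (j - 1) + b j t * w t (j + 1) + c j t * w t j) (Set.Icc T₀ T₁) t)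
    (hT₀ : T₀ < 0) (hT₁ : 0 < T₁)
    (k : ℕ) (hk : 1 ≤ k)
    (hw0 : w 0 (0 : ℤ) ≠ 0)
    (hz : ∀ j : ℕ, 1 ≤ j → j ≤ k → w 0 (j : ℤ) = 0)
    (hwk : w 0 ((k : ℤ) + 1) ≠ 0) :
    ∀ m : ℕ, ∀ j : ℕ, j ≤ k + 1 → min j (k+1-j) = m →
      (fun t => w t (j:ℤ) - Dcoef a b w k j * t ^ m)
        =o[𝓝[Set.Icc T₀ T₁] (0:ℝ)] fun t => t ^ m := by
  set S := Set.Icc T₀ T₁ with hSdef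
  have h0S : (0:ℝ) ∈ S := ⟨hT₀.le, hT₁.le⟩
  have hconv : Convex ℝ S := convex_Icc _ _
  obtain ⟨C, hCb⟩ := hbound
  have haO : ∀ i : ℤ, (fun t => a i t) =O[𝓝[S] (0:ℝ)] (fun _ => (1:ℝ)) := fun i =>
    isBigO_iff.mpr ⟨C, by filter_upwards [self_mem_nhdsWithin] with t ht
                          simpa using (hCb i t ht).1⟩
  have hbO : ∀ i : ℤ, (fun t => b i t) =O[𝓝[S] (0:ℝ)] (fun _ => (1:ℝ)) := fun i =>
    isBigO_iff.mpr ⟨C, by filter_upwards [self_mem_nhdsWithin] with t ht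
                          simpa using (hCb i t ht).2.1⟩
  have hcO : ∀ i : ℤ, (fun t => c i t) =O[𝓝[S] (0:ℝ)] (fun _ => (1:ℝ)) := fun i =>
    isBigO_iff.mpr ⟨C, by filter_upwards [self_mem_nhdsWithin] with t ht
                          simpa using (hCb i t ht).2.2⟩
  have hwcont : ∀ i : ℤ, Tendsto (fun t => w t i) (𝓝[S] (0:ℝ)) (𝓝 (w 0 i)) :=
    fun i => (hsol i 0 h0S).continuousWithinAt
  have hpow : ∀ m : ℕ, (fun t : ℝ => t ^ (m+1)) =o[𝓝[S] (0:ℝ)] fun t => t ^ m := by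
    intro m
    have h : Tendsto (fun t : ℝ => t) (𝓝[S] (0:ℝ)) (𝓝 0) :=
      tendsto_id.mono_left nhdsWithin_le_nhds
    have := (isBigO_refl (fun t : ℝ => t ^ m) (𝓝[S] (0:ℝ))).mul_isLittleO
      ((isLittleO_one_iff ℝ).mpr h)
    simpa [pow_succ] using this
  -- Claim A : big-O bounds
  have claimA : ∀ m : ℕ, ∀ j : ℕ, j ≤ k + 1 → m ≤ j → m ≤ k + 1 - j →
      (fun t => w t (j:ℤ)) =O[𝓝[S] (0:ℝ)] fun t => t ^ m := by
    intro m
    induction m with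
    | zero =>
      intro j hj _ _
      have h1 := (hwcont (j:ℤ)).isBigO_one ℝ
      calc (fun t => w t (j:ℤ)) =O[𝓝[S] (0:ℝ)] (fun _ => (1:ℝ)) := h1
        _ =O[𝓝[S] (0:ℝ)] (fun t => t ^ 0) := by simp [isBigO_refl]
    | succ m ih =>
      intro j hjk1 hmj hmj'
      have hj1 : 1 ≤ j := by omega
      have hjk : j ≤ k := by omega
      have hz0 : w 0 (j:ℤ) = 0 := hz j hj1 hjk
      have hcast1 : ((j:ℤ) - 1) = ((j - 1 : ℕ) : ℤ) := by omega
      have hcast2 : ((j:ℤ) + 1) = ((j + 1 : ℕ) : ℤ) := by push_cast; ring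
      have hO1 : (fun t => w t ((j:ℤ) - 1)) =O[𝓝[S] (0:ℝ)] fun t => t ^ m := by
        rw [hcast1]; exact ih (j-1) (by omega) (by omega) (by omega)
      have hO2 : (fun t => w t ((j:ℤ) + 1)) =O[𝓝[S] (0:ℝ)] fun t => t ^ m := by
        rw [hcast2]; exact ih (j+1) (by omega) (by omega) (by omega)
      have hO3 : (fun t => w t (j:ℤ)) =O[𝓝[S] (0:ℝ)] fun t => t ^ m :=
        ih j hjk1 (by omega) (by omega)
      have h1 : (fun t => a (j:ℤ) t * w t ((j:ℤ)-1)) =O[𝓝[S] (0:ℝ)] fun t => t ^ m := by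
        simpa using (haO (j:ℤ)).mul hO1
      have h2 : (fun t => b (j:ℤ) t * w t ((j:ℤ)+1)) =O[𝓝[S] (0:ℝ)] fun t => t ^ m := by
        simpa using (hbO (j:ℤ)).mul hO2
      have h3 : (fun t => c (j:ℤ) t * w t (j:ℤ)) =O[𝓝[S] (0:ℝ)] fun t => t ^ m := by
        simpa using (hcO (j:ℤ)).mul hO3
      exact OStep hconv h0S hz0 (hsol (j:ℤ)) ((h1.add h2).add h3)
  -- Claim B : little-o expansions, by induction on m
  intro m
  induction m with
  | zero =>
    intro j hjk1 hmin
    rw [Nat.min_eq_zero_iff] at hmin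
    have hj : j = 0 ∨ j = k + 1 := by omega
    rcases hj with rfl | rfl
    · have hD : Dcoef a b w k 0 = w 0 0 := by
        rw [Dcoef, if_pos (by omega)]
        simp [Finset.Icc_eq_empty (show ¬ (1:ℕ) ≤ 0 by omega)]
      rw [hD]
      simp only [pow_zero, mul_one, Nat.cast_zero]
      rw [isLittleO_one_iff]
      simpa using (hwcont 0).sub_const (w 0 0)
    · have hD : Dcoef a b w k (k+1) = w 0 ((k:ℤ)+1) := by
        rw [Dcoef, if_neg (by omega), if_pos (by omega),
          Finset.Icc_eq_empty (show ¬ k+1 ≤ k by omega)]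
        simp [Nat.sub_self]
      rw [hD]
      have hcast : (((k+1:ℕ)):ℤ) = (k:ℤ)+1 := by push_cast; ring
      simp only [pow_zero, mul_one, hcast]
      rw [isLittleO_one_iff]
      simpa using (hwcont ((k:ℤ)+1)).sub_const (w 0 ((k:ℤ)+1))
  | succ m ih =>
    intro j hjk1 hmin
    have h1 : m + 1 ≤ j := le_trans (le_of_eq hmin.symm) (min_le_left _ _)
    have h2 : m + 1 ≤ k + 1 - j := le_trans (le_of_eq hmin.symm) (min_le_right _ _)
    have hj1 : 1 ≤ j := by omega
    have hjk : j ≤ k := by omega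
    have hz0 : w 0 (j:ℤ) = 0 := hz j hj1 hjk
    have hcast1 : ((j:ℤ) - 1) = ((j - 1 : ℕ) : ℤ) := by omega
    have hcast2 : ((j:ℤ) + 1) = ((j + 1 : ℕ) : ℤ) := by push_cast; ring
    have hcterm : (fun t => c (j:ℤ) t * w t (j:ℤ)) =o[𝓝[S] (0:ℝ)] fun t => t ^ m := by
      have hO : (fun t => w t (j:ℤ)) =O[𝓝[S] (0:ℝ)] fun t => t ^ (m+1) :=
        claimA (m+1) j hjk1 h1 h2
      have h' : (fun t => c (j:ℤ) t * w t (j:ℤ)) =O[𝓝[S] (0:ℝ)] fun t => t ^ (m+1) := by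
        simpa using (hcO (j:ℤ)).mul hO
      exact h'.trans_isLittleO (hpow m)
    have hcoef : ∀ α : ℝ, α = ((m:ℝ)+1) * Dcoef a b w k j →
        (fun t => (a (j:ℤ) t * w t ((j:ℤ)-1) + b (j:ℤ) t * w t ((j:ℤ)+1)
            + c (j:ℤ) t * w t (j:ℤ)) - α * t ^ m) =o[𝓝[S] (0:ℝ)] (fun t => t ^ m) →
        (fun t => w t (j:ℤ) - Dcoef a b w k j * t ^ (m+1))
          =o[𝓝[S] (0:ℝ)] fun t => t ^ (m+1) := by
      intro α hα hg
      have hfin := oStep hconv h0S hz0 (hsol (j:ℤ)) hg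
      refine hfin.congr (fun t => ?_) (fun t => rfl)
      rw [hα]
      have hne : ((m:ℝ)+1) ≠ 0 := by positivity
      field_simp
    rcases lt_trichotomy (2*j) (k+1) with hcase | hcase | hcase
    · -- 2j ≤ k : left neighbor expands, right neighbor small
      have hjm : j = m + 1 := by
        have := min_eq_left (show j ≤ k+1-j by omega)
        omega
      have hIHl := ih (j-1) (by omega) (by rw [min_eq_left (by omega)]; omega)
      simp only [← hcast1] at hIHl
      have hA : (fun t => a (j:ℤ) t * w t ((j:ℤ)-1)
          - a (j:ℤ) 0 * Dcoef a b w k (j-1) * t ^ m) =o[𝓝[S] (0:ℝ)] fun t => t ^ m :=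
        mulExpand (hacont (j:ℤ) 0 h0S) hIHl
      have hBsm : (fun t => b (j:ℤ) t * w t ((j:ℤ)+1)) =o[𝓝[S] (0:ℝ)] fun t => t ^ m := by
        have hO : (fun t => w t ((j:ℤ)+1)) =O[𝓝[S] (0:ℝ)] fun t => t ^ (m+1) := by
          rw [hcast2]; exact claimA (m+1) (j+1) (by omega) (by omega) (by omega)
        have h' : (fun t => b (j:ℤ) t * w t ((j:ℤ)+1)) =O[𝓝[S] (0:ℝ)] fun t => t^(m+1) := by
          simpa using (hbO (j:ℤ)).mul hO
        exact h'.trans_isLittleO (hpow m)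
      have hfm : (Nat.factorial m : ℝ) ≠ 0 := by
        exact_mod_cast (Nat.factorial_pos m).ne'
      have halpha : a (j:ℤ) 0 * Dcoef a b w k (j-1) = ((m:ℝ)+1) * Dcoef a b w k j := by
        obtain rfl : j = m + 1 := hjm
        have e1 : Dcoef a b w k (m+1-1)
            = w 0 0 * (∏ i ∈ Finset.Icc 1 m, a (i:ℤ) 0) / (Nat.factorial m : ℝ) := by
          rw [Nat.add_sub_cancel, Dcoef, if_pos (by omega)]
        have e2 : Dcoef a b w k (m+1)
            = w 0 0 * ((∏ i ∈ Finset.Icc 1 m, a (i:ℤ) 0) * a ((m:ℤ)+1) 0)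
              / ((Nat.factorial m : ℝ) * ((m:ℝ)+1)) := by
          rw [Dcoef, if_pos (by omega), Finset.prod_Icc_succ_top (by omega : 1 ≤ m+1)]
          push_cast [Nat.factorial_succ]
          ring
        rw [e1, e2]
        push_cast
        field_simp
      refine hcoef _ halpha ?_
      have h := (hA.add hBsm).add hcterm
      refine h.congr (fun t => ?_) (fun t => rfl)
      ring
    · -- 2j = k+1 : both neighbors expand
      have hjm : j = m + 1 := by
        have := min_eq_left (show j ≤ k+1-j by omega)
        omega
      have hIHl := ih (j-1) (by omega) (by rw [min_eq_left (by omega)]; omega)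
      simp only [← hcast1] at hIHl
      have hIHr := ih (j+1) (by omega) (by rw [min_eq_right (by omega)]; omega)
      simp only [← hcast2] at hIHr
      have hA : (fun t => a (j:ℤ) t * w t ((j:ℤ)-1)
          - a (j:ℤ) 0 * Dcoef a b w k (j-1) * t ^ m) =o[𝓝[S] (0:ℝ)] fun t => t ^ m :=
        mulExpand (hacont (j:ℤ) 0 h0S) hIHl
      have hB : (fun t => b (j:ℤ) t * w t ((j:ℤ)+1)
          - b (j:ℤ) 0 * Dcoef a b w k (j+1) * t ^ m) =o[𝓝[S] (0:ℝ)] fun t => t ^ m :=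
        mulExpand (hbcont (j:ℤ) 0 h0S) hIHr
      have hfm : (Nat.factorial m : ℝ) ≠ 0 := by
        exact_mod_cast (Nat.factorial_pos m).ne'
      have halpha : a (j:ℤ) 0 * Dcoef a b w k (j-1) + b (j:ℤ) 0 * Dcoef a b w k (j+1)
          = ((m:ℝ)+1) * Dcoef a b w k j := by
        obtain rfl : j = m + 1 := hjm
        have hk2 : k = 2*m+1 := by omega
        subst hk2
        have e1 : Dcoef a b w (2*m+1) (m+1-1)
            = w 0 0 * (∏ i ∈ Finset.Icc 1 m, a (i:ℤ) 0) / (Nat.factorial m : ℝ) := by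
          rw [Nat.add_sub_cancel, Dcoef, if_pos (by omega)]
        have e2 : Dcoef a b w (2*m+1) (m+1+1)
            = w 0 (((2*m+1:ℕ):ℤ)+1) * (∏ i ∈ Finset.Icc (m+1+1) (2*m+1), b (i:ℤ) 0)
              / (Nat.factorial m : ℝ) := by
          rw [Dcoef, if_neg (by omega), if_pos (by omega),
            show 2*m+1+1-(m+1+1) = m by omega]
        have e3 : Dcoef a b w (2*m+1) (m+1)
            = (w 0 0 * ((∏ i ∈ Finset.Icc 1 m, a (i:ℤ) 0) * a ((m:ℤ)+1) 0)
              + w 0 (((2*m+1:ℕ):ℤ)+1)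
                * (b ((m:ℤ)+1) 0 * ∏ i ∈ Finset.Icc (m+1+1) (2*m+1), b (i:ℤ) 0))
              / ((Nat.factorial m : ℝ) * ((m:ℝ)+1)) := by
          rw [Dcoef, if_neg (by omega), if_neg (by omega),
            Finset.prod_Icc_succ_top (by omega : 1 ≤ m+1),
            prodIccSplit (fun i => b (i:ℤ) 0) (by omega : m+1 ≤ 2*m+1)]
          push_cast [Nat.factorial_succ]
          ring
        rw [e1, e2, e3]
        push_cast
        field_simp
      refine hcoef _ halpha ?_
      have h := (hA.add hB).add hcterm
      refine h.congr (fun t => ?_) (fun t => rfl)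
      ring
    · -- k+2 ≤ 2j : right neighbor expands, left neighbor small
      have hjm : k + 1 - j = m + 1 := by
        have := min_eq_right (show k+1-j ≤ j by omega)
        omega
      have hIHr := ih (j+1) (by omega) (by rw [min_eq_right (by omega)]; omega)
      simp only [← hcast2] at hIHr
      have hB : (fun t => b (j:ℤ) t * w t ((j:ℤ)+1)
          - b (j:ℤ) 0 * Dcoef a b w k (j+1) * t ^ m) =o[𝓝[S] (0:ℝ)] fun t => t ^ m :=
        mulExpand (hbcont (j:ℤ) 0 h0S) hIHr
      have hAsm : (fun t => a (j:ℤ) t * w t ((j:ℤ)-1)) =o[𝓝[S] (0:ℝ)] fun t => t ^ m := by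
        have hO : (fun t => w t ((j:ℤ)-1)) =O[𝓝[S] (0:ℝ)] fun t => t ^ (m+1) := by
          rw [hcast1]; exact claimA (m+1) (j-1) (by omega) (by omega) (by omega)
        have h' : (fun t => a (j:ℤ) t * w t ((j:ℤ)-1)) =O[𝓝[S] (0:ℝ)] fun t => t^(m+1) := by
          simpa using (haO (j:ℤ)).mul hO
        exact h'.trans_isLittleO (hpow m)
      have hfm : (Nat.factorial m : ℝ) ≠ 0 := by
        exact_mod_cast (Nat.factorial_pos m).ne'
      have halpha : b (j:ℤ) 0 * Dcoef a b w k (j+1) = ((m:ℝ)+1) * Dcoef a b w k j := by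
        have e1 : Dcoef a b w k (j+1)
            = w 0 ((k:ℤ)+1) * (∏ i ∈ Finset.Icc (j+1) k, b (i:ℤ) 0)
              / (Nat.factorial m : ℝ) := by
          rw [Dcoef, if_neg (by omega), if_pos (by omega), show k+1-(j+1) = m by omega]
        have e2 : Dcoef a b w k j
            = w 0 ((k:ℤ)+1) * (b (j:ℤ) 0 * ∏ i ∈ Finset.Icc (j+1) k, b (i:ℤ) 0)
              / ((Nat.factorial m : ℝ) * ((m:ℝ)+1)) := by
          rw [Dcoef, if_neg (by omega), if_pos (by omega), hjm,
            prodIccSplit (fun i => b (i:ℤ) 0) hjk]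
          push_cast [Nat.factorial_succ]
          ring
        rw [e1, e2]
        field_simp
      refine hcoef _ halpha ?_
      have h := (hAsm.add hB).add hcterm
      refine h.congr (fun t => ?_) (fun t => rfl)
      ring

open Asymptotics in
theorem taylor_coefficients_at_finite_degree_zero
    (T₀ T₁ δ : ℝ) (hT : T₀ < T₁) (hδ : 0 < δ)
    (a b c : ℤ → ℝ → ℝ) (w : ℝ → ℤ → ℝ)
    (hacont : ∀ j : ℤ, ContinuousOn (a j) (Set.Icc T₀ T₁))
    (hbcont : ∀ j : ℤ, ContinuousOn (b j) (Set.Icc T₀ T₁))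
    (hccont : ∀ j : ℤ, ContinuousOn (c j) (Set.Icc T₀ T₁))
    (hbound : ∃ C : ℝ, ∀ j : ℤ, ∀ t ∈ Set.Icc T₀ T₁,
      |a j t| ≤ C ∧ |b j t| ≤ C ∧ |c j t| ≤ C)
    (hpos : ∀ j : ℤ, ∀ t ∈ Set.Icc T₀ T₁, δ ≤ a j t ∧ δ ≤ b j t)
    (hsol : ∀ j : ℤ, ∀ t ∈ Set.Icc T₀ T₁,
      HasDerivWithinAt (fun s => w s j)
        (a j t * w t (j - 1) + b j t * w t (j + 1) + c j t * w t j) (Set.Icc T₀ T₁) t)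
    (hT₀ : T₀ < 0) (hT₁ : 0 < T₁)
    (k : ℕ) (hk : 1 ≤ k)
    (hw0 : w 0 (0 : ℤ) ≠ 0)
    (hz : ∀ j : ℕ, 1 ≤ j → j ≤ k → w 0 (j : ℤ) = 0)
    (hwk : w 0 ((k : ℤ) + 1) ≠ 0) :
    ∀ j : ℕ, 1 ≤ j → j ≤ k →
      (2 * j ≤ k →
        ((fun t : ℝ => w t (j : ℤ) -
            (w 0 (0 : ℤ) * (∏ i ∈ Finset.Icc 1 j, a (i : ℤ) 0) / (Nat.factorial j : ℝ)) *
              t ^ (min j (k + 1 - j)))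
          =o[𝓝[Set.Icc T₀ T₁] (0 : ℝ)] (fun t : ℝ => t ^ (min j (k + 1 - j)))) ∧
        w 0 (0 : ℤ) * (∏ i ∈ Finset.Icc 1 j, a (i : ℤ) 0) / (Nat.factorial j : ℝ) ≠ 0 ∧
        (w 0 (0 : ℤ) * (∏ i ∈ Finset.Icc 1 j, a (i : ℤ) 0) / (Nat.factorial j : ℝ)) *
          w 0 (0 : ℤ) > 0) ∧
      (k + 2 ≤ 2 * j →
        ((fun t : ℝ => w t (j : ℤ) -
            (w 0 ((k : ℤ) + 1) * (∏ i ∈ Finset.Icc j k, b (i : ℤ) 0) /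
              (Nat.factorial (k + 1 - j) : ℝ)) * t ^ (min j (k + 1 - j)))
          =o[𝓝[Set.Icc T₀ T₁] (0 : ℝ)] (fun t : ℝ => t ^ (min j (k + 1 - j)))) ∧
        w 0 ((k : ℤ) + 1) * (∏ i ∈ Finset.Icc j k, b (i : ℤ) 0) /
          (Nat.factorial (k + 1 - j) : ℝ) ≠ 0 ∧
        (w 0 ((k : ℤ) + 1) * (∏ i ∈ Finset.Icc j k, b (i : ℤ) 0) /
          (Nat.factorial (k + 1 - j) : ℝ)) * w 0 ((k : ℤ) + 1) > 0) ∧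
      (2 * j = k + 1 →
        ((fun t : ℝ => w t (j : ℤ) -
            ((w 0 (0 : ℤ) * (∏ i ∈ Finset.Icc 1 j, a (i : ℤ) 0) +
              w 0 ((k : ℤ) + 1) * (∏ i ∈ Finset.Icc j k, b (i : ℤ) 0)) /
                (Nat.factorial j : ℝ)) * t ^ (min j (k + 1 - j)))
          =o[𝓝[Set.Icc T₀ T₁] (0 : ℝ)] (fun t : ℝ => t ^ (min j (k + 1 - j)))) ∧
        (w 0 (0 : ℤ) * w 0 ((k : ℤ) + 1) > 0 →
          (w 0 (0 : ℤ) * (∏ i ∈ Finset.Icc 1 j, a (i : ℤ) 0) +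
            w 0 ((k : ℤ) + 1) * (∏ i ∈ Finset.Icc j k, b (i : ℤ) 0)) /
              (Nat.factorial j : ℝ) ≠ 0 ∧
          ((w 0 (0 : ℤ) * (∏ i ∈ Finset.Icc 1 j, a (i : ℤ) 0) +
            w 0 ((k : ℤ) + 1) * (∏ i ∈ Finset.Icc j k, b (i : ℤ) 0)) /
              (Nat.factorial j : ℝ)) * w 0 (0 : ℤ) > 0)) := by
  intro j hj1 hjk
  have h0S : (0:ℝ) ∈ Set.Icc T₀ T₁ := ⟨hT₀.le, hT₁.le⟩
  have claimB := taylor_main T₀ T₁ δ hT hδ a b c w hacont hbcont hccont hbound hpos hsol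
    hT₀ hT₁ k hk hw0 hz hwk
  have hP : 0 < ∏ i ∈ Finset.Icc 1 j, a (i:ℤ) 0 :=
    Finset.prod_pos fun i _ => lt_of_lt_of_le hδ (hpos (i:ℤ) 0 h0S).1
  have hQ : 0 < ∏ i ∈ Finset.Icc j k, b (i:ℤ) 0 :=
    Finset.prod_pos fun i _ => lt_of_lt_of_le hδ (hpos (i:ℤ) 0 h0S).2
  have hfac : (0:ℝ) < (Nat.factorial j : ℝ) := by exact_mod_cast Nat.factorial_pos j
  have hfac2 : (0:ℝ) < (Nat.factorial (k+1-j) : ℝ) := by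
    exact_mod_cast Nat.factorial_pos (k+1-j)
  have hsq : 0 < w 0 (0:ℤ) * w 0 (0:ℤ) := mul_self_pos.mpr hw0
  have hsqk : 0 < w 0 ((k:ℤ)+1) * w 0 ((k:ℤ)+1) := mul_self_pos.mpr hwk
  refine ⟨?_, ?_, ?_⟩
  · intro hc
    have hmin : min j (k+1-j) = j := min_eq_left (by omega)
    have hD : Dcoef a b w k j
        = w 0 0 * (∏ i ∈ Finset.Icc 1 j, a (i:ℤ) 0) / (Nat.factorial j : ℝ) := by
      rw [Dcoef, if_pos hc]
    have ho := claimB j j (by omega) hmin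
    simp only [hD] at ho
    have hgt : w 0 (0:ℤ) * (∏ i ∈ Finset.Icc 1 j, a (i:ℤ) 0) / (Nat.factorial j : ℝ)
        * w 0 (0:ℤ) > 0 := by
      have heq : w 0 (0:ℤ) * (∏ i ∈ Finset.Icc 1 j, a (i:ℤ) 0) / (Nat.factorial j : ℝ)
          * w 0 (0:ℤ)
          = w 0 (0:ℤ) * w 0 (0:ℤ) * (∏ i ∈ Finset.Icc 1 j, a (i:ℤ) 0)
            / (Nat.factorial j : ℝ) := by ring
      rw [heq]
      exact div_pos (mul_pos hsq hP) hfac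
    refine ⟨?_, left_ne_zero_of_mul (ne_of_gt hgt), hgt⟩
    simp only [hmin]
    exact ho
  · intro hc
    have hmin : min j (k+1-j) = k+1-j := min_eq_right (by omega)
    have hD : Dcoef a b w k j
        = w 0 ((k:ℤ)+1) * (∏ i ∈ Finset.Icc j k, b (i:ℤ) 0)
          / (Nat.factorial (k+1-j) : ℝ) := by
      rw [Dcoef, if_neg (by omega), if_pos hc]
    have ho := claimB (k+1-j) j (by omega) hmin
    simp only [hD] at ho
    have hgt : w 0 ((k:ℤ)+1) * (∏ i ∈ Finset.Icc j k, b (i:ℤ) 0)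
        / (Nat.factorial (k+1-j) : ℝ) * w 0 ((k:ℤ)+1) > 0 := by
      have heq : w 0 ((k:ℤ)+1) * (∏ i ∈ Finset.Icc j k, b (i:ℤ) 0)
          / (Nat.factorial (k+1-j) : ℝ) * w 0 ((k:ℤ)+1)
          = w 0 ((k:ℤ)+1) * w 0 ((k:ℤ)+1) * (∏ i ∈ Finset.Icc j k, b (i:ℤ) 0)
            / (Nat.factorial (k+1-j) : ℝ) := by ring
      rw [heq]
      exact div_pos (mul_pos hsqk hQ) hfac2
    refine ⟨?_, left_ne_zero_of_mul (ne_of_gt hgt), hgt⟩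
    simp only [hmin]
    exact ho
  · intro hc
    have hmin : min j (k+1-j) = j := min_eq_left (by omega)
    have hD : Dcoef a b w k j
        = (w 0 0 * (∏ i ∈ Finset.Icc 1 j, a (i:ℤ) 0)
            + w 0 ((k:ℤ)+1) * (∏ i ∈ Finset.Icc j k, b (i:ℤ) 0))
          / (Nat.factorial j : ℝ) := by
      rw [Dcoef, if_neg (by omega), if_neg (by omega)]
    have ho := claimB j j (by omega) hmin
    simp only [hD] at ho
    refine ⟨by simp only [hmin]; exact ho, ?_⟩
    intro hprod
    have hgt : (w 0 (0:ℤ) * (∏ i ∈ Finset.Icc 1 j, a (i:ℤ) 0)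
          + w 0 ((k:ℤ)+1) * (∏ i ∈ Finset.Icc j k, b (i:ℤ) 0))
        / (Nat.factorial j : ℝ) * w 0 (0:ℤ) > 0 := by
      have heq : (w 0 (0:ℤ) * (∏ i ∈ Finset.Icc 1 j, a (i:ℤ) 0)
            + w 0 ((k:ℤ)+1) * (∏ i ∈ Finset.Icc j k, b (i:ℤ) 0))
          / (Nat.factorial j : ℝ) * w 0 (0:ℤ)
          = (w 0 (0:ℤ) * w 0 (0:ℤ) * (∏ i ∈ Finset.Icc 1 j, a (i:ℤ) 0)
            + (w 0 (0:ℤ) * w 0 ((k:ℤ)+1)) * (∏ i ∈ Finset.Icc j k, b (i:ℤ) 0))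
          / (Nat.factorial j : ℝ) := by ring
      rw [heq]
      exact div_pos (add_pos (mul_pos hsq hP) (mul_pos hprod hQ)) hfac
    exact ⟨left_ne_zero_of_mul (ne_of_gt hgt), hgt⟩
end

section
/- Assume F is constant. Let μ¹ and μ² be Borel probability measures on K_n, each invariant under the shift T and under φ(t,·) for every t ≥ 0. If u belongs to the support of μ¹, v belongs to the support of μ², and r ∈ ℤ satisfies u_0 = v_0 + r and u_1 = v_1 + r, then u_j = v_j + r for all j ∈ ℤ. -/
open MeasureTheory Set Filter Topology

/-- First partial derivative `∂₁V`. -/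
noncomputable def V1 (V : ℝ → ℝ → ℝ) (x y : ℝ) : ℝ := deriv (fun s => V s y) x

/-- Second partial derivative `∂₂V`. -/
noncomputable def V2 (V : ℝ → ℝ → ℝ) (x y : ℝ) : ℝ := deriv (fun s => V x s) y

/-- Mixed partial derivative `∂₁∂₂V`. -/
noncomputable def V12 (V : ℝ → ℝ → ℝ) (x y : ℝ) : ℝ := deriv (fun s => V2 V s y) x

/-- The set of configurations with spacing bounded by `n`, with the product topology. -/
def Kn (n : ℕ) : Set (ℤ → ℝ) := {u | ∀ i : ℤ, |u (i + 1) - u i| ≤ (n : ℝ)}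

/-- The shift `(Tu)_i = u_{i-1}` on configurations. -/
def shift (u : ℤ → ℝ) : ℤ → ℝ := fun i => u (i - 1)

/-- The shift `T`, as a self-map of `Kn n`. -/
def shiftK (n : ℕ) (u : Kn n) : Kn n :=
  ⟨shift u.val, by
    intro i
    have h := u.2 (i - 1)
    have h1 : i - 1 + 1 = i := by ring
    rw [h1] at h
    simpa [shift] using h⟩


section Aux
open Function
variable {V : ℝ → ℝ → ℝ}

lemma hasDerivAt_fst (hV : ContDiff ℝ 2 (uncurry V)) (x y : ℝ) :
    HasDerivAt (fun s => V s y) ((fderiv ℝ (uncurry V) (x, y)) (1, 0)) x := by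
  have h : HasFDerivAt (uncurry V) (fderiv ℝ (uncurry V) (x, y)) (x, y) :=
    (hV.differentiable (by norm_num)).differentiableAt.hasFDerivAt
  have hc : HasDerivAt (fun s : ℝ => ((s, y) : ℝ × ℝ)) (1, 0) x := by
    simpa using (hasDerivAt_id x).prodMk (hasDerivAt_const x y)
  exact h.comp_hasDerivAt x hc

lemma hasDerivAt_snd (hV : ContDiff ℝ 2 (uncurry V)) (x y : ℝ) :
    HasDerivAt (fun s => V x s) ((fderiv ℝ (uncurry V) (x, y)) (0, 1)) y := by
  have h : HasFDerivAt (uncurry V) (fderiv ℝ (uncurry V) (x, y)) (x, y) :=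
    (hV.differentiable (by norm_num)).differentiableAt.hasFDerivAt
  have hc : HasDerivAt (fun s : ℝ => ((x, s) : ℝ × ℝ)) (0, 1) y := by
    simpa using (hasDerivAt_const y x).prodMk (hasDerivAt_id y)
  exact h.comp_hasDerivAt y hc

lemma V1_eq (hV : ContDiff ℝ 2 (uncurry V)) (x y : ℝ) :
    V1 V x y = (fderiv ℝ (uncurry V) (x, y)) (1, 0) := (hasDerivAt_fst hV x y).deriv

lemma V2_eq (hV : ContDiff ℝ 2 (uncurry V)) (x y : ℝ) :
    V2 V x y = (fderiv ℝ (uncurry V) (x, y)) (0, 1) := (hasDerivAt_snd hV x y).deriv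

lemma V1_cont (hV : ContDiff ℝ 2 (uncurry V)) : Continuous (fun p : ℝ × ℝ => V1 V p.1 p.2) := by
  have h : Continuous (fun p : ℝ × ℝ => (fderiv ℝ (uncurry V) p) (1, 0)) :=
    (hV.continuous_fderiv (by simp)).clm_apply continuous_const
  exact h.congr fun p => (V1_eq hV p.1 p.2).symm

lemma V2_cont (hV : ContDiff ℝ 2 (uncurry V)) : Continuous (fun p : ℝ × ℝ => V2 V p.1 p.2) := by
  have h : Continuous (fun p : ℝ × ℝ => (fderiv ℝ (uncurry V) p) (0, 1)) :=
    (hV.continuous_fderiv (by simp)).clm_apply continuous_const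
  exact h.congr fun p => (V2_eq hV p.1 p.2).symm

lemma hasDerivWithinAt_V (hV : ContDiff ℝ 2 (uncurry V)) {a b : ℝ → ℝ} {a' b' t : ℝ}
    {s : Set ℝ} (ha : HasDerivWithinAt a a' s t) (hb : HasDerivWithinAt b b' s t) :
    HasDerivWithinAt (fun τ => V (a τ) (b τ))
      (V1 V (a t) (b t) * a' + V2 V (a t) (b t) * b') s t := by
  have h : HasFDerivAt (uncurry V) (fderiv ℝ (uncurry V) (a t, b t)) (a t, b t) :=
    (hV.differentiable (by norm_num)).differentiableAt.hasFDerivAt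
  have hc : HasDerivWithinAt (fun τ => ((a τ, b τ) : ℝ × ℝ)) (a', b') s t := ha.prodMk hb
  have h2 := h.comp_hasDerivWithinAt t hc
  refine h2.congr_deriv (Eq.symm ?_)
  have h3 : ((a', b') : ℝ × ℝ) = a' • ((1 : ℝ), (0 : ℝ)) + b' • ((0 : ℝ), (1 : ℝ)) := by
    simp [Prod.ext_iff]
  rw [V1_eq hV, V2_eq hV, h3, map_add, ContinuousLinearMap.map_smul, ContinuousLinearMap.map_smul]
  simp [smul_eq_mul]
  ring

lemma per_int (hper : ∀ x y : ℝ, V (x + 1) (y + 1) = V x y) :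
    ∀ (m : ℤ) (x y : ℝ), V (x + m) (y + m) = V x y := by
  intro m
  induction m using Int.induction_on with
  | zero => simp
  | succ k ih =>
    intro x y
    have h1 : (x : ℝ) + ((k : ℤ) + 1 : ℤ) = (x + (k : ℤ)) + 1 := by push_cast; ring
    have h2 : (y : ℝ) + ((k : ℤ) + 1 : ℤ) = (y + (k : ℤ)) + 1 := by push_cast; ring
    rw [h1, h2, hper, ih]
  | pred k ih =>
    intro x y
    have := ih (x - 1) (y - 1)
    have h1 : (x : ℝ) + (-(k : ℤ) - 1 : ℤ) = (x - 1) + (-(k : ℤ) : ℤ) := by push_cast; ring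
    have h2 : (y : ℝ) + (-(k : ℤ) - 1 : ℤ) = (y - 1) + (-(k : ℤ) : ℤ) := by push_cast; ring
    rw [h1, h2, this]
    have h3 : x = (x - 1) + 1 := by ring
    have h4 : y = (y - 1) + 1 := by ring
    conv_rhs => rw [h3, h4]
    rw [hper]

lemma V1_per (hper : ∀ x y : ℝ, V (x + 1) (y + 1) = V x y) (m : ℤ) (x y : ℝ) :
    V1 V (x + m) (y + m) = V1 V x y := by
  have hf : (fun s => V s (y + m)) = fun s => (fun z => V z y) (s - m) := by
    funext s
    have h := per_int hper m (s - m) y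
    simp only []
    rw [← h]
    norm_num
  unfold V1
  rw [hf, deriv_comp_sub_const (f := fun z => V z y)]
  norm_num

lemma V2_per (hper : ∀ x y : ℝ, V (x + 1) (y + 1) = V x y) (m : ℤ) (x y : ℝ) :
    V2 V (x + m) (y + m) = V2 V x y := by
  have hf : (fun s => V (x + m) s) = fun s => (fun z => V x z) (s - m) := by
    funext s
    have h := per_int hper m x (s - m)
    simp only []
    rw [← h]
    norm_num
  unfold V2
  rw [hf, deriv_comp_sub_const (f := fun z => V x z)]
  norm_num

/-- A continuous diagonally-periodic function is bounded on a strip. -/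
lemma strip_bound {g : ℝ × ℝ → ℝ} (hg : Continuous g)
    (hper : ∀ (m : ℤ) (x y : ℝ), g (x + m, y + m) = g (x, y)) (c : ℝ) :
    ∃ C : ℝ, ∀ x y : ℝ, |y - x| ≤ c → |g (x, y)| ≤ C := by
  obtain ⟨C, hC⟩ := (IsCompact.prod (isCompact_Icc (a := (0:ℝ)) (b := 1))
    (isCompact_Icc (a := -c) (b := c + 1))).exists_bound_of_continuousOn hg.continuousOn
  refine ⟨C, fun x y hxy => ?_⟩
  have hfr := Int.fract_nonneg x
  have hfr1 := Int.fract_lt_one x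
  have key : g (x, y) = g (Int.fract x, (y - x) + Int.fract x) := by
    have h := hper ⌊x⌋ (Int.fract x) ((y - x) + Int.fract x)
    rw [← h]
    have e1 : Int.fract x + (⌊x⌋ : ℝ) = x := by rw [Int.fract]; ring
    have e2 : (y - x) + Int.fract x + (⌊x⌋ : ℝ) = y := by rw [Int.fract]; ring
    rw [e1, e2]
  rw [key]
  rw [abs_le] at hxy
  have h1 : (Int.fract x, (y - x) + Int.fract x) ∈ Icc (0:ℝ) 1 ×ˢ Icc (-c) (c+1) := by
    simp only [Set.mem_prod, Set.mem_Icc]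
    refine ⟨⟨hfr, hfr1.le⟩, by linarith [hxy.1], by linarith [hxy.2]⟩
  simpa using hC _ h1

lemma V12_eq (hV : ContDiff ℝ 2 (uncurry V)) (x y : ℝ) :
    V12 V x y = fderiv ℝ (fderiv ℝ (uncurry V)) (x, y) (1, 0) (0, 1) := by
  have hC1 : ContDiff ℝ 1 (fderiv ℝ (uncurry V)) := hV.fderiv_right (le_refl 2)
  have hdiff : HasFDerivAt (fderiv ℝ (uncurry V))
      (fderiv ℝ (fderiv ℝ (uncurry V)) (x, y)) (x, y) :=
    ((hC1.differentiable one_ne_zero) (x, y)).hasFDerivAt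
  have hc : HasDerivAt (fun s : ℝ => ((s, y) : ℝ × ℝ)) (1, 0) x := by
    simpa using (hasDerivAt_id x).prodMk (hasDerivAt_const x y)
  have h2 : HasDerivAt (fun s : ℝ => fderiv ℝ (uncurry V) (s, y))
      (fderiv ℝ (fderiv ℝ (uncurry V)) (x, y) (1, 0)) x := hdiff.comp_hasDerivAt x hc
  have h3 : HasDerivAt (fun s : ℝ => fderiv ℝ (uncurry V) (s, y) (0, 1))
      (fderiv ℝ (fderiv ℝ (uncurry V)) (x, y) (1, 0) (0, 1)) x := by
    have := h2.clm_apply (hasDerivAt_const x ((0:ℝ), (1:ℝ)))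
    simpa using this
  have hfun : (fun s : ℝ => V2 V s y) = fun s : ℝ => fderiv ℝ (uncurry V) (s, y) (0, 1) := by
    funext s; exact V2_eq hV s y
  unfold V12
  rw [hfun]
  exact h3.deriv

lemma hasDerivAt_V1_snd (hV : ContDiff ℝ 2 (uncurry V)) (x y : ℝ) :
    HasDerivAt (fun z => V1 V x z) (V12 V x y) y := by
  have hC1 : ContDiff ℝ 1 (fderiv ℝ (uncurry V)) := hV.fderiv_right (le_refl 2)
  have hdiff : HasFDerivAt (fderiv ℝ (uncurry V))
      (fderiv ℝ (fderiv ℝ (uncurry V)) (x, y)) (x, y) :=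
    ((hC1.differentiable one_ne_zero) (x, y)).hasFDerivAt
  have hc : HasDerivAt (fun z : ℝ => ((x, z) : ℝ × ℝ)) (0, 1) y := by
    simpa using (hasDerivAt_const y x).prodMk (hasDerivAt_id y)
  have h2 : HasDerivAt (fun z : ℝ => fderiv ℝ (uncurry V) (x, z))
      (fderiv ℝ (fderiv ℝ (uncurry V)) (x, y) (0, 1)) y := hdiff.comp_hasDerivAt y hc
  have h3 : HasDerivAt (fun z : ℝ => fderiv ℝ (uncurry V) (x, z) (1, 0))
      (fderiv ℝ (fderiv ℝ (uncurry V)) (x, y) (0, 1) (1, 0)) y := by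
    have := h2.clm_apply (hasDerivAt_const y ((1:ℝ), (0:ℝ)))
    simpa using this
  have hfun : (fun z : ℝ => V1 V x z) = fun z : ℝ => fderiv ℝ (uncurry V) (x, z) (1, 0) := by
    funext z; exact V1_eq hV x z
  rw [hfun]
  have hsymm : fderiv ℝ (fderiv ℝ (uncurry V)) (x, y) (0, 1) (1, 0)
      = fderiv ℝ (fderiv ℝ (uncurry V)) (x, y) (1, 0) (0, 1) := by
    exact second_derivative_symmetric
      (fun p => ((hV.differentiable (by norm_num)) p).hasFDerivAt) hdiff _ _
  rw [V12_eq hV, ← hsymm]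
  exact h3

lemma V1_strictAnti (hV : ContDiff ℝ 2 (uncurry V)) {δ : ℝ} (hδ : 0 < δ)
    (htwist : ∀ x y : ℝ, V12 V x y ≤ -δ) (x : ℝ) :
    StrictAnti (fun z => V1 V x z) := by
  apply strictAnti_of_deriv_neg
  intro z
  rw [(hasDerivAt_V1_snd hV x z).deriv]
  linarith [htwist x z]

lemma V2_strictAnti (hV : ContDiff ℝ 2 (uncurry V)) {δ : ℝ} (hδ : 0 < δ)
    (htwist : ∀ x y : ℝ, V12 V x y ≤ -δ) (y : ℝ) :
    StrictAnti (fun z => V2 V z y) := by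
  apply strictAnti_of_deriv_neg
  intro z
  have : deriv (fun s => V2 V s y) z = V12 V z y := rfl
  rw [this]
  linarith [htwist z y]

lemma equilibrium_unique (hV : ContDiff ℝ 2 (uncurry V)) {δ : ℝ} (hδ : 0 < δ)
    (htwist : ∀ x y : ℝ, V12 V x y ≤ -δ) (c : ℝ) (a b : ℤ → ℝ)
    (ha : ∀ j : ℤ, V2 V (a (j-1)) (a j) + V1 V (a j) (a (j+1)) = c)
    (hb : ∀ j : ℤ, V2 V (b (j-1)) (b j) + V1 V (b j) (b (j+1)) = c)
    (h0 : a 0 = b 0) (h1 : a 1 = b 1) : ∀ j : ℤ, a j = b j := by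
  have inj1 : ∀ x : ℝ, Function.Injective (fun z => V1 V x z) :=
    fun x => (V1_strictAnti hV hδ htwist x).injective
  have inj2 : ∀ y : ℝ, Function.Injective (fun z => V2 V z y) :=
    fun y => (V2_strictAnti hV hδ htwist y).injective
  have fwd : ∀ j : ℤ, a j = b j → a (j+1) = b (j+1) → a (j+2) = b (j+2) := by
    intro j e0 e1
    have haj := ha (j+1)
    have hbj := hb (j+1)
    have hs : j + 1 - 1 = j := by ring
    have hs2 : j + 1 + 1 = j + 2 := by ring
    rw [hs, hs2] at haj hbj
    rw [e0, e1] at haj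
    have : V1 V (b (j+1)) (a (j+2)) = V1 V (b (j+1)) (b (j+2)) := by linarith
    exact inj1 (b (j+1)) this
  have bwd : ∀ j : ℤ, a j = b j → a (j+1) = b (j+1) → a (j-1) = b (j-1) := by
    intro j e0 e1
    have haj := ha j
    have hbj := hb j
    rw [e0, e1] at haj
    have : V2 V (a (j-1)) (b j) = V2 V (b (j-1)) (b j) := by linarith
    exact inj2 (b j) this
  have key : ∀ j : ℤ, a j = b j ∧ a (j+1) = b (j+1) := by
    intro j
    induction j using Int.induction_on with
    | zero => exact ⟨h0, by simpa using h1⟩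
    | succ k ih =>
      refine ⟨ih.2, ?_⟩
      have := fwd k ih.1 ih.2
      convert this using 2 <;> ring
    | pred k ih =>
      refine ⟨?_, by simpa using ih.1⟩
      have := bwd (-k) ih.1 ih.2
      convert this using 2 <;> ring
  exact fun j => (key j).1

end Aux

lemma integrable_of_bound {X : Type*} [TopologicalSpace X] [MeasurableSpace X]
    [OpensMeasurableSpace X] (μ : Measure X) [IsProbabilityMeasure μ]
    (f : X → ℝ) (hf : Continuous f) (C : ℝ) (h : ∀ x, |f x| ≤ C) : Integrable f μ := by
  refine (integrable_const C).mono' hf.aestronglyMeasurable (ae_of_all _ fun x => ?_)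
  simpa [Real.norm_eq_abs] using h x

lemma integral_deriv_zero {X : Type*} [TopologicalSpace X] [MeasurableSpace X]
    [BorelSpace X] (μ : Measure X) [IsProbabilityMeasure μ]
    (φ : ℝ → X → X) (hφ0 : φ 0 = id) (hφcont : ∀ t : ℝ, 0 ≤ t → Continuous (φ t))
    (hinv : ∀ t : ℝ, 0 ≤ t → Measure.map (φ t) μ = μ)
    (e g : X → ℝ) (he : Continuous e) (hg : Continuous g)
    (C Ce : ℝ) (hgC : ∀ x, |g x| ≤ C) (heC : ∀ x, |e x| ≤ Ce)
    (hderiv : ∀ x : X, ∀ t : ℝ, 0 ≤ t →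
      HasDerivWithinAt (fun s => e (φ s x)) (g (φ t x)) (Set.Ici (0:ℝ)) t) :
    ∫ x, g x ∂μ = 0 := by
  -- increment bound via mean value inequality
  have incr : ∀ (x : X) (h : ℝ), 0 ≤ h → |e (φ h x) - e x| ≤ C * h := by
    intro x h hh
    have hmvt := Convex.norm_image_sub_le_of_norm_hasDerivWithin_le
      (f := fun s => e (φ s x)) (f' := fun t => g (φ t x)) (C := C) (s := Set.Icc 0 h)
      (fun t ht => (hderiv x t ht.1).mono Set.Icc_subset_Ici_self)
      (fun t _ => by simpa [Real.norm_eq_abs] using hgC (φ t x))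
      (convex_Icc 0 h) (Set.left_mem_Icc.mpr hh) (Set.right_mem_Icc.mpr hh)
    have : φ 0 x = x := by rw [hφ0]; rfl
    simpa [Real.norm_eq_abs, this, abs_of_nonneg hh] using hmvt
  -- invariance of the integral of e
  have einv : ∀ h : ℝ, 0 ≤ h → ∫ x, e (φ h x) ∂μ = ∫ x, e x ∂μ := by
    intro h hh
    rw [← integral_map ((hφcont h hh).measurable.aemeasurable)
      (by rw [hinv h hh]; exact he.aestronglyMeasurable), hinv h hh]
  -- the difference quotients
  set q : ℕ → X → ℝ := fun k x => ((k:ℝ)+1) * (e (φ (((k:ℝ)+1)⁻¹) x) - e x) with hq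
  have hkpos : ∀ k : ℕ, (0:ℝ) < (k:ℝ)+1 := fun k => by positivity
  have hqcont : ∀ k, Continuous (q k) :=
    fun k => continuous_const.mul ((he.comp (hφcont _ (by positivity))).sub he)
  -- each difference quotient has zero integral
  have hint : ∀ k : ℕ, Integrable (q k) μ :=
    fun k => integrable_of_bound μ (q k) (hqcont k) C (fun x => by
      have h1 := incr x (((k:ℝ)+1)⁻¹) (by positivity)
      have h2 : |q k x| = ((k:ℝ)+1) * |e (φ (((k:ℝ)+1)⁻¹) x) - e x| := by
        rw [hq]; rw [abs_mul, abs_of_pos (hkpos k)]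
      rw [h2]
      calc ((k:ℝ)+1) * |e (φ (((k:ℝ)+1)⁻¹) x) - e x| ≤ ((k:ℝ)+1) * (C * ((k:ℝ)+1)⁻¹) :=
            mul_le_mul_of_nonneg_left h1 (hkpos k).le
        _ = C := by field_simp)
  have hzero : ∀ k : ℕ, ∫ x, q k x ∂μ = 0 := by
    intro k
    have hh : (0:ℝ) ≤ ((k:ℝ)+1)⁻¹ := by positivity
    have hsub : Integrable (fun x => e (φ (((k:ℝ)+1)⁻¹) x) - e x) μ := by
      have := hint k
      have heq : (fun x => e (φ (((k:ℝ)+1)⁻¹) x) - e x)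
          = fun x => (((k:ℝ)+1)⁻¹) * q k x := by
        funext x; rw [hq]; field_simp
      rw [heq]
      exact (hint k).const_mul _
    have : ∫ x, q k x ∂μ = ((k:ℝ)+1) * ∫ x, (e (φ (((k:ℝ)+1)⁻¹) x) - e x) ∂μ := by
      rw [hq, integral_const_mul]
    have hInt1 : Integrable (fun x => e (φ (((k:ℝ)+1)⁻¹) x)) μ :=
      integrable_of_bound μ _ (he.comp (hφcont _ hh)) Ce (fun x => heC _)
    have hInt2 : Integrable (fun x => e x) μ := integrable_of_bound μ _ he Ce heC
    rw [this, integral_sub hInt1 hInt2, einv _ hh, sub_self, mul_zero]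
  -- pointwise convergence of difference quotients to g
  have hlim : ∀ x : X, Tendsto (fun k => q k x) atTop (𝓝 (g x)) := by
    intro x
    have hd := hderiv x 0 le_rfl
    have hφ0x : φ 0 x = x := by rw [hφ0]; rfl
    rw [hasDerivWithinAt_iff_tendsto_slope] at hd
    have hseq : Tendsto (fun k : ℕ => ((k:ℝ)+1)⁻¹) atTop (𝓝[Set.Ici (0:ℝ) \ {0}] 0) := by
      apply tendsto_nhdsWithin_of_tendsto_nhds_of_eventually_within
      · exact tendsto_one_div_add_atTop_nhds_zero_nat.congr (fun k => by
          rw [one_div])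
      · refine Eventually.of_forall (fun k => ?_)
        have hpos : (0:ℝ) < ((k:ℝ)+1)⁻¹ := by positivity
        exact ⟨Set.mem_Ici.mpr hpos.le, fun h => (ne_of_gt hpos) (Set.mem_singleton_iff.mp h)⟩
    have := hd.comp hseq
    rw [hφ0x] at this
    refine this.congr (fun k => ?_)
    simp only [Function.comp_apply, slope_def_field, q]
    rw [hφ0x]
    field_simp
    ring
  -- dominated convergence
  have hdct := tendsto_integral_of_dominated_convergence (μ := μ) (bound := fun _ => C) (F := q) (f := g)
    (fun k => (hqcont k).aestronglyMeasurable) (integrable_const C)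
    (fun k => ae_of_all _ (fun x => by
      have h1 := incr x (((k:ℝ)+1)⁻¹) (by positivity)
      have h2 : ‖q k x‖ = ((k:ℝ)+1) * |e (φ (((k:ℝ)+1)⁻¹) x) - e x| := by
        rw [Real.norm_eq_abs, hq, abs_mul, abs_of_pos (hkpos k)]
      rw [h2]
      calc ((k:ℝ)+1) * |e (φ (((k:ℝ)+1)⁻¹) x) - e x| ≤ ((k:ℝ)+1) * (C * ((k:ℝ)+1)⁻¹) :=
            mul_le_mul_of_nonneg_left h1 (hkpos k).le
        _ = C := by field_simp))
    (ae_of_all _ hlim)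
  have : Tendsto (fun _ : ℕ => (0:ℝ)) atTop (𝓝 (∫ x, g x ∂μ)) := by
    refine hdct.congr (fun k => ?_)
    exact hzero k
  exact tendsto_nhds_unique this tendsto_const_nhds

noncomputable def fj (V : ℝ → ℝ → ℝ) (F : ℝ → ℝ) (j : ℤ) (w : ℤ → ℝ) : ℝ :=
  -(V2 V (w (j - 1)) (w j)) - V1 V (w j) (w (j + 1)) + F 0

lemma support_equilibrium
    (δ : ℝ) (hδ : 0 < δ) (V : ℝ → ℝ → ℝ) (F : ℝ → ℝ)
    (hV : ContDiff ℝ 2 (Function.uncurry V))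
    (hper : ∀ x y : ℝ, V (x + 1) (y + 1) = V x y)
    (htwist : ∀ x y : ℝ, V12 V x y ≤ -δ)
    (n : ℕ) (φ : ℝ → Kn n → Kn n)
    (hφ0 : φ 0 = id)
    (hφcont : ∀ t : ℝ, 0 ≤ t → Continuous (φ t))
    (hφsol : ∀ u : Kn n, ∀ j : ℤ, ∀ t : ℝ, 0 ≤ t →
      HasDerivWithinAt (fun s => (φ s u).val j)
        (-(V2 V ((φ t u).val (j - 1)) ((φ t u).val j)) -
          V1 V ((φ t u).val j) ((φ t u).val (j + 1)) + F t)
        (Set.Ici (0 : ℝ)) t)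
    (hFconst : ∀ t t' : ℝ, F t = F t')
    (μ : Measure (Kn n)) [IsProbabilityMeasure μ]
    (hshift : Measure.map (shiftK n) μ = μ)
    (hφinv : ∀ t : ℝ, 0 ≤ t → Measure.map (φ t) μ = μ)
    (u : Kn n) (hu : ∀ U : Set (Kn n), IsOpen U → u ∈ U → 0 < μ U) :
    ∀ j : ℤ, fj V F j u.val = 0 := by
  classical
  -- coordinates are continuous
  have ccoord : ∀ i : ℤ, Continuous (fun w : Kn n => w.val i) :=
    fun i => (continuous_apply i).comp continuous_subtype_val
  -- the solution has derivative `fj j`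
  have hsol : ∀ x : Kn n, ∀ j : ℤ, ∀ t : ℝ, 0 ≤ t →
      HasDerivWithinAt (fun s => (φ s x).val j) (fj V F j ((φ t x)).val) (Set.Ici (0:ℝ)) t := by
    intro x j t ht
    have h := hφsol x j t ht
    rw [hFconst t 0] at h
    exact h
  -- continuity of fj ∘ val
  have fjcont : ∀ j : ℤ, Continuous (fun w : Kn n => fj V F j w.val) := by
    intro j
    unfold fj
    exact (((V2_cont hV).comp ((ccoord (j-1)).prodMk (ccoord j))).neg.sub
      ((V1_cont hV).comp ((ccoord j).prodMk (ccoord (j+1))))).add continuous_const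
  -- bounds on V, V1, V2 on the strip of width n
  obtain ⟨C0, hC0⟩ := strip_bound (hV.continuous) (fun m x y => per_int hper m x y) (n : ℝ)
  obtain ⟨C1, hC1⟩ := strip_bound (V1_cont hV) (fun m x y => V1_per hper m x y) (n : ℝ)
  obtain ⟨C2, hC2⟩ := strip_bound (V2_cont hV) (fun m x y => V2_per hper m x y) (n : ℝ)
  -- coordinate differences are bounded
  have hdiff : ∀ w : Kn n, ∀ j : ℤ, |w.val j - w.val (j - 1)| ≤ (n : ℝ) := by
    intro w j
    have h := w.2 (j - 1)
    have h1 : j - 1 + 1 = j := by ring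
    rwa [h1] at h
  have hdiff' : ∀ w : Kn n, ∀ j : ℤ, |w.val (j + 1) - w.val j| ≤ (n : ℝ) := fun w j => w.2 j
  -- fj is bounded on Kn
  set Cf : ℝ := C2 + C1 + |F 0| with hCf
  have hfb : ∀ j : ℤ, ∀ w : Kn n, |fj V F j w.val| ≤ Cf := by
    intro j w
    have h2 := hC2 (w.val (j-1)) (w.val j) (hdiff w j)
    have h1 := hC1 (w.val j) (w.val (j+1)) (hdiff' w j)
    calc |fj V F j w.val|
        ≤ |V2 V (w.val (j-1)) (w.val j)| + |V1 V (w.val j) (w.val (j+1))| + |F 0| := by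
          unfold fj
          calc |(-(V2 V (w.val (j-1)) (w.val j)) - V1 V (w.val j) (w.val (j+1))) + F 0|
              ≤ |(-(V2 V (w.val (j-1)) (w.val j)) - V1 V (w.val j) (w.val (j+1)))| + |F 0| :=
                abs_add_le _ _
            _ ≤ |V2 V (w.val (j-1)) (w.val j)| + |V1 V (w.val j) (w.val (j+1))| + |F 0| := by
                have := abs_sub (-(V2 V (w.val (j-1)) (w.val j))) (V1 V (w.val j) (w.val (j+1)))
                simp only [abs_neg] at this
                linarith
      _ ≤ Cf := by rw [hCf]; gcongr
  have hCf0 : 0 ≤ Cf := (abs_nonneg _).trans (hfb 0 u)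
  have hC0n : 0 ≤ C0 := (abs_nonneg _).trans (hC0 0 0 (by norm_num))
  have hC1n : 0 ≤ C1 := (abs_nonneg _).trans (hC1 0 0 (by norm_num))
  have hC2n : 0 ≤ C2 := (abs_nonneg _).trans (hC2 0 0 (by norm_num))
  have h01 : ∀ w : Kn n, |w.val 1 - w.val 0| ≤ (n : ℝ) := fun w => by simpa using hdiff' w 0
  -- Step 1 : the energy observable
  set g₁ : Kn n → ℝ := fun y =>
    V1 V (y.val 0) (y.val 1) * fj V F 0 y.val + V2 V (y.val 0) (y.val 1) * fj V F 1 y.val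
    with hg₁
  have hg1zero : ∫ y, g₁ y ∂μ = 0 := by
    apply integral_deriv_zero μ φ hφ0 hφcont hφinv
      (fun y => V (y.val 0) (y.val 1)) g₁
      (hV.continuous.comp ((ccoord 0).prodMk (ccoord 1)))
      (((((V1_cont hV).comp ((ccoord 0).prodMk (ccoord 1))).mul (fjcont 0)).add
        (((V2_cont hV).comp ((ccoord 0).prodMk (ccoord 1))).mul (fjcont 1))))
      (C1 * Cf + C2 * Cf) C0
      (fun y => by
        rw [hg₁]
        have b1 : |V1 V (y.val 0) (y.val 1) * fj V F 0 y.val| ≤ C1 * Cf := by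
          rw [abs_mul]
          exact mul_le_mul (hC1 _ _ (h01 y)) (hfb 0 y) (abs_nonneg _) hC1n
        have b2 : |V2 V (y.val 0) (y.val 1) * fj V F 1 y.val| ≤ C2 * Cf := by
          rw [abs_mul]
          exact mul_le_mul (hC2 _ _ (h01 y)) (hfb 1 y) (abs_nonneg _) hC2n
        calc |V1 V (y.val 0) (y.val 1) * fj V F 0 y.val
              + V2 V (y.val 0) (y.val 1) * fj V F 1 y.val|
            ≤ |V1 V (y.val 0) (y.val 1) * fj V F 0 y.val|
              + |V2 V (y.val 0) (y.val 1) * fj V F 1 y.val| := abs_add_le _ _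
          _ ≤ C1 * Cf + C2 * Cf := add_le_add b1 b2)
      (fun y => hC0 _ _ (h01 y))
      (fun x t ht => by
        have := hasDerivWithinAt_V hV (hsol x 0 t ht) (hsol x 1 t ht)
        exact this)
  -- Step 2 : zero drift
  have hdrift : ∫ y, fj V F 0 (y : Kn n).val ∂μ = 0 := by
    have hK : ∀ k : ℕ, (0:ℝ) < (k:ℝ) + 1 := fun k => by positivity
    -- derivative of the truncated observable
    have hψ : ∀ k : ℕ, ∀ z : ℝ, HasDerivAt (fun z => ((k:ℝ)+1) * Real.arctan (z / ((k:ℝ)+1)))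
        ((1 + (z / ((k:ℝ)+1))^2)⁻¹) z := by
      intro k z
      have hKne : ((k:ℝ)+1) ≠ 0 := (hK k).ne'
      have inner : HasDerivAt (fun z : ℝ => z / ((k:ℝ)+1)) (1 / ((k:ℝ)+1)) z := by
        simpa using (hasDerivAt_id z).div_const ((k:ℝ)+1)
      have harc := Real.hasDerivAt_arctan (z / ((k:ℝ)+1))
      have hcomp := (harc.comp z inner).const_mul ((k:ℝ)+1)
      refine hcomp.congr_deriv (Eq.symm ?_)
      field_simp
    have hperk : ∀ k : ℕ, ∫ y, (1 + ((y : Kn n).val 0 / ((k:ℝ)+1))^2)⁻¹ * fj V F 0 y.val ∂μ = 0 := by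
      intro k
      have hKne : ((k:ℝ)+1) ≠ 0 := (hK k).ne'
      apply integral_deriv_zero μ φ hφ0 hφcont hφinv
        (fun y : Kn n => ((k:ℝ)+1) * Real.arctan (y.val 0 / ((k:ℝ)+1)))
        (fun y : Kn n => (1 + (y.val 0 / ((k:ℝ)+1))^2)⁻¹ * fj V F 0 y.val)
        (continuous_const.mul (Real.continuous_arctan.comp ((ccoord 0).div_const _)))
        (((continuous_const.add (((ccoord 0).div_const _).pow 2)).inv₀
          (fun y => (by positivity : (0:ℝ) < 1 + ((y : Kn n).val 0 / ((k:ℝ)+1))^2).ne')).mul (fjcont 0))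
        Cf (((k:ℝ)+1) * (Real.pi / 2))
        (fun y => by
          rw [abs_mul]
          have h1 : |(1 + (y.val 0 / ((k:ℝ)+1))^2)⁻¹| ≤ 1 := by
            rw [abs_inv]
            rw [abs_of_pos (by positivity : (0:ℝ) < 1 + (y.val 0 / ((k:ℝ)+1))^2)]
            rw [inv_le_one_iff₀]
            right
            nlinarith [sq_nonneg (y.val 0 / ((k:ℝ)+1))]
          calc |(1 + (y.val 0 / ((k:ℝ)+1))^2)⁻¹| * |fj V F 0 y.val|
              ≤ 1 * Cf := mul_le_mul h1 (hfb 0 y) (abs_nonneg _) zero_le_one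
            _ = Cf := one_mul Cf)
        (fun y => by
          rw [abs_mul, abs_of_pos (hK k)]
          have := Real.arctan_lt_pi_div_two (y.val 0 / ((k:ℝ)+1))
          have := Real.neg_pi_div_two_lt_arctan (y.val 0 / ((k:ℝ)+1))
          have habs : |Real.arctan (y.val 0 / ((k:ℝ)+1))| ≤ Real.pi / 2 := by
            rw [abs_le]; constructor <;> linarith
          exact mul_le_mul_of_nonneg_left habs (hK k).le)
        (fun x t ht => by
          have := (hψ k ((φ t x).val 0)).comp_hasDerivWithinAt t (hsol x 0 t ht)
          exact this)
    -- let k → ∞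
    have hlim : ∀ y : Kn n, Tendsto
        (fun k : ℕ => (1 + ((y : Kn n).val 0 / ((k:ℝ)+1))^2)⁻¹ * fj V F 0 y.val) atTop
        (𝓝 (fj V F 0 y.val)) := by
      intro y
      have h1 : Tendsto (fun k : ℕ => (y.val 0) / ((k:ℝ)+1)) atTop (𝓝 0) := by
        have := tendsto_one_div_add_atTop_nhds_zero_nat.const_mul (y.val 0)
        simpa [div_eq_mul_inv, mul_comm, one_div] using this
      have h2 : Tendsto (fun k : ℕ => (1 + ((y.val 0) / ((k:ℝ)+1))^2)⁻¹) atTop (𝓝 1) := by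
        have h3 : Tendsto (fun k : ℕ => 1 + ((y.val 0) / ((k:ℝ)+1))^2) atTop (𝓝 1) := by
          have := (h1.pow 2)
          simpa using tendsto_const_nhds.add this
        have := h3.inv₀ (by norm_num)
        simpa using this
      have := h2.mul_const (fj V F 0 y.val)
      simpa using this
    have hdct := tendsto_integral_of_dominated_convergence (μ := μ)
      (bound := fun _ => Cf)
      (F := fun k (y : Kn n) => (1 + ((y : Kn n).val 0 / ((k:ℝ)+1))^2)⁻¹ * fj V F 0 y.val)
      (f := fun y : Kn n => fj V F 0 y.val)
      (fun k => ((((continuous_const.add (((ccoord 0).div_const _).pow 2)).inv₀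
          (fun y => (by positivity : (0:ℝ) < 1 + ((y : Kn n).val 0 / ((k:ℝ)+1))^2).ne')).mul (fjcont 0))).aestronglyMeasurable)
      (integrable_const Cf)
      (fun k => ae_of_all _ (fun y => by
        rw [Real.norm_eq_abs, abs_mul]
        have h1 : |(1 + (y.val 0 / ((k:ℝ)+1))^2)⁻¹| ≤ 1 := by
          rw [abs_inv, abs_of_pos (by positivity : (0:ℝ) < 1 + (y.val 0 / ((k:ℝ)+1))^2),
            inv_le_one_iff₀]
          right
          nlinarith [sq_nonneg (y.val 0 / ((k:ℝ)+1))]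
        calc |(1 + (y.val 0 / ((k:ℝ)+1))^2)⁻¹| * |fj V F 0 y.val|
            ≤ 1 * Cf := mul_le_mul h1 (hfb 0 y) (abs_nonneg _) zero_le_one
          _ = Cf := one_mul Cf))
      (ae_of_all _ hlim)
    have hzz : Tendsto (fun _ : ℕ => (0:ℝ)) atTop (𝓝 (∫ y, fj V F 0 (y : Kn n).val ∂μ)) :=
      hdct.congr (fun k => hperk k)
    exact tendsto_nhds_unique hzz tendsto_const_nhds
  -- Step 3 : the shift identity
  have Tcont : Continuous (shiftK n) := by
    apply Continuous.subtype_mk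
    exact continuous_pi fun i => (continuous_apply (i-1)).comp continuous_subtype_val
  have hBB : ∫ y, V2 V ((y : Kn n).val 0) (y.val 1) * fj V F 1 y.val ∂μ
      = ∫ y, V2 V ((y : Kn n).val (-1)) (y.val 0) * fj V F 0 y.val ∂μ := by
    have hm : ∫ y, V2 V ((y : Kn n).val 0) (y.val 1) * fj V F 1 y.val ∂μ
        = ∫ y, V2 V (((shiftK n y) : Kn n).val 0) ((shiftK n y).val 1) * fj V F 1 (shiftK n y).val ∂μ := by
      conv_lhs => rw [← hshift]
      rw [integral_map Tcont.measurable.aemeasurable (by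
        rw [hshift]
        exact (((V2_cont hV).comp ((ccoord 0).prodMk (ccoord 1))).mul
          (fjcont 1)).aestronglyMeasurable)]
    rw [hm]
    congr 1
  -- Step 4 : combine to get `∫ (fj 0)² = 0`
  have hsq : ∫ y, (fj V F 0 (y : Kn n).val)^2 ∂μ = 0 := by
    have int1 : Integrable (fun y : Kn n => V1 V (y.val 0) (y.val 1) * fj V F 0 y.val) μ := by
      apply integrable_of_bound μ _ (((V1_cont hV).comp ((ccoord 0).prodMk (ccoord 1))).mul (fjcont 0)) (C1 * Cf)
      intro y
      rw [Pi.mul_apply, abs_mul]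
      exact mul_le_mul (hC1 _ _ (h01 y)) (hfb 0 y) (abs_nonneg _) hC1n
    have int2 : Integrable (fun y : Kn n => V2 V (y.val 0) (y.val 1) * fj V F 1 y.val) μ := by
      apply integrable_of_bound μ _ (((V2_cont hV).comp ((ccoord 0).prodMk (ccoord 1))).mul (fjcont 1)) (C2 * Cf)
      intro y
      rw [Pi.mul_apply, abs_mul]
      exact mul_le_mul (hC2 _ _ (h01 y)) (hfb 1 y) (abs_nonneg _) hC2n
    have hsplit : ∫ y, g₁ y ∂μ
        = (∫ y, V1 V ((y : Kn n).val 0) (y.val 1) * fj V F 0 y.val ∂μ)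
          + ∫ y, V2 V ((y : Kn n).val 0) (y.val 1) * fj V F 1 y.val ∂μ := by
      rw [hg₁]
      exact integral_add int1 int2
    -- the combined integrand equals (F 0 - fj 0) * fj 0
    have hcomb : ∫ y, V1 V ((y : Kn n).val 0) (y.val 1) * fj V F 0 y.val ∂μ
        + ∫ y, V2 V ((y : Kn n).val (-1)) (y.val 0) * fj V F 0 y.val ∂μ
        = F 0 * (∫ y, fj V F 0 (y : Kn n).val ∂μ) - ∫ y, (fj V F 0 (y : Kn n).val)^2 ∂μ := by
      have int3 : Integrable (fun y : Kn n => V2 V (y.val (-1)) (y.val 0) * fj V F 0 y.val) μ := by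
        apply integrable_of_bound μ _ (((V2_cont hV).comp ((ccoord (-1)).prodMk (ccoord 0))).mul (fjcont 0)) (C2 * Cf)
        intro y
        rw [Pi.mul_apply, abs_mul]
        refine mul_le_mul (hC2 _ _ ?_) (hfb 0 y) (abs_nonneg _) hC2n
        simpa using hdiff y 0
      have intf : Integrable (fun y : Kn n => fj V F 0 y.val) μ :=
        integrable_of_bound μ _ (fjcont 0) Cf (hfb 0)
      have intf2 : Integrable (fun y : Kn n => (fj V F 0 y.val)^2) μ := by
        apply integrable_of_bound μ _ ((fjcont 0).pow 2) (Cf^2)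
        intro y
        rw [Pi.pow_apply, abs_pow]
        exact pow_le_pow_left₀ (abs_nonneg _) (hfb 0 y) 2
      have heq : ∀ y : Kn n, V1 V (y.val 0) (y.val 1) * fj V F 0 y.val
          + V2 V (y.val (-1)) (y.val 0) * fj V F 0 y.val
          = F 0 * fj V F 0 y.val - (fj V F 0 y.val)^2 := by
        intro y
        have hfj : fj V F 0 y.val = -(V2 V (y.val (-1)) (y.val 0)) - V1 V (y.val 0) (y.val 1) + F 0 := by
          unfold fj
          norm_num
        rw [hfj]
        ring
      rw [← integral_add int1 int3]
      rw [← integral_const_mul, ← integral_sub (intf.const_mul (F 0)) intf2]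
      congr 1
      funext y
      exact heq y
    rw [hsplit, hBB, hcomb, hdrift, mul_zero, zero_sub, neg_eq_zero] at hg1zero
    exact hg1zero
  -- Step 5 : fj 0 vanishes a.e.
  have hae0 : ∀ᵐ y ∂μ, fj V F 0 (y : Kn n).val = 0 := by
    have intf2 : Integrable (fun y : Kn n => (fj V F 0 y.val)^2) μ := by
      apply integrable_of_bound μ _ ((fjcont 0).pow 2) (Cf^2)
      intro y
      rw [Pi.pow_apply, abs_pow]
      exact pow_le_pow_left₀ (abs_nonneg _) (hfb 0 y) 2
    have := (integral_eq_zero_iff_of_nonneg_ae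
      (ae_of_all _ (fun y : Kn n => sq_nonneg (fj V F 0 y.val))) intf2).mp hsq
    filter_upwards [this] with y hy
    exact pow_eq_zero_iff (n := 2) (by norm_num) |>.mp hy
  -- Step 6 : fj vanishes a.e. for every j
  have Smem : ∀ w : Kn n, (fun i => w.val (i+1)) ∈ Kn n := fun w i => w.2 (i+1)
  set S : Kn n → Kn n := fun w => ⟨fun i => w.val (i+1), Smem w⟩ with hS
  have Scont : Continuous S := by
    apply Continuous.subtype_mk
    apply continuous_pi
    intro i
    exact (continuous_apply (i+1)).comp continuous_subtype_val
  have hST : ∀ w, S (shiftK n w) = w := by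
    intro w
    apply Subtype.ext
    funext i
    show w.val (i + 1 - 1) = w.val i
    congr 1
    ring
  have hSinv : Measure.map S μ = μ := by
    conv_lhs => rw [← hshift]
    rw [Measure.map_map Scont.measurable Tcont.measurable]
    have hid : S ∘ shiftK n = id := funext hST
    rw [hid, Measure.map_id]
  have hSm : ∀ m : ℕ, Measure.map (S^[m]) μ = μ := by
    intro m
    induction m with
    | zero => simp
    | succ m ih =>
      rw [Function.iterate_succ,
        ← Measure.map_map (Scont.iterate m).measurable Scont.measurable, hSinv, ih]
  have hTm : ∀ m : ℕ, Measure.map ((shiftK n)^[m]) μ = μ := by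
    intro m
    induction m with
    | zero => simp
    | succ m ih =>
      rw [Function.iterate_succ,
        ← Measure.map_map (Tcont.iterate m).measurable Tcont.measurable, hshift, ih]
  have hSco : ∀ m : ℕ, ∀ w : Kn n, ∀ i : ℤ, (S^[m] w).val i = w.val (i + m) := by
    intro m
    induction m with
    | zero => intro w i; simp
    | succ m ih =>
      intro w i
      rw [Function.iterate_succ_apply, ih (S w) i]
      show w.val (i + m + 1) = w.val (i + (m+1 : ℕ))
      congr 1
      push_cast
      ring
  have hTco : ∀ m : ℕ, ∀ w : Kn n, ∀ i : ℤ, ((shiftK n)^[m] w).val i = w.val (i - m) := by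
    intro m
    induction m with
    | zero => intro w i; simp
    | succ m ih =>
      intro w i
      rw [Function.iterate_succ_apply, ih (shiftK n w) i]
      show w.val (i - m - 1) = w.val (i - (m+1 : ℕ))
      congr 1
      push_cast
      ring
  have hmsble : MeasurableSet {y : Kn n | fj V F 0 y.val = 0} :=
    (fjcont 0).measurable (measurableSet_singleton (0:ℝ))
  have haej : ∀ j : ℤ, ∀ᵐ y ∂μ, fj V F j y.val = 0 := by
    intro j
    rcases le_or_gt 0 j with hj | hj
    · have hGμ := hSm j.toNat
      have h := hae0
      rw [← hGμ, ae_map_iff (Scont.iterate j.toNat).measurable.aemeasurable hmsble] at h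
      filter_upwards [h] with y hy
      unfold fj at hy ⊢
      rw [hSco j.toNat y, hSco j.toNat y, hSco j.toNat y] at hy
      rw [Int.toNat_of_nonneg hj] at hy
      have e1 : (0:ℤ) - 1 + j = j - 1 := by ring
      have e2 : (0:ℤ) + j = j := by ring
      have e3 : (0:ℤ) + 1 + j = j + 1 := by ring
      rw [e1, e2, e3] at hy
      exact hy
    · have hGμ := hTm (-j).toNat
      have h := hae0
      rw [← hGμ, ae_map_iff (Tcont.iterate (-j).toNat).measurable.aemeasurable hmsble] at h
      filter_upwards [h] with y hy
      unfold fj at hy ⊢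
      rw [hTco (-j).toNat y, hTco (-j).toNat y, hTco (-j).toNat y] at hy
      rw [Int.toNat_of_nonneg (by linarith : (0:ℤ) ≤ -j)] at hy
      have e1 : (0:ℤ) - 1 - -j = j - 1 := by ring
      have e2 : (0:ℤ) - -j = j := by ring
      have e3 : (0:ℤ) + 1 - -j = j + 1 := by ring
      rw [e1, e2, e3] at hy
      exact hy
  -- Step 7 : conclude on the support
  intro j
  by_contra hne
  have hO : IsOpen {y : Kn n | fj V F j y.val ≠ 0} :=
    IsOpen.preimage (fjcont j) isOpen_compl_singleton
  have hOnull : μ {y : Kn n | fj V F j y.val ≠ 0} = 0 := by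
    have h := haej j
    rw [ae_iff] at h
    exact h
  have := hu _ hO hne
  rw [hOnull] at this
  exact lt_irrefl 0 this




theorem support_configurations_do_not_intersect
    (δ : ℝ) (hδ : 0 < δ) (V : ℝ → ℝ → ℝ) (F : ℝ → ℝ)
    (hV : ContDiff ℝ 2 (Function.uncurry V))
    (hper : ∀ x y : ℝ, V (x + 1) (y + 1) = V x y)
    (htwist : ∀ x y : ℝ, V12 V x y ≤ -δ)
    (hF : Continuous F)
    (n : ℕ) (φ : ℝ → Kn n → Kn n)
    (hφ0 : φ 0 = id)
    (hφadd : ∀ s t : ℝ, 0 ≤ s → 0 ≤ t → φ (s + t) = φ s ∘ φ t)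
    (hφcont : ∀ t : ℝ, 0 ≤ t → Continuous (φ t))
    (hφsol : ∀ u : Kn n, ∀ j : ℤ, ∀ t : ℝ, 0 ≤ t →
      HasDerivWithinAt (fun s => (φ s u).val j)
        (-(V2 V ((φ t u).val (j - 1)) ((φ t u).val j)) -
          V1 V ((φ t u).val j) ((φ t u).val (j + 1)) + F t)
        (Set.Ici (0 : ℝ)) t)
    (hφshift : ∀ t : ℝ, 0 ≤ t → ∀ u : Kn n, φ t (shiftK n u) = shiftK n (φ t u))
    (hFconst : ∀ t t' : ℝ, F t = F t')
    (μ₁ μ₂ : Measure (Kn n)) [IsProbabilityMeasure μ₁] [IsProbabilityMeasure μ₂]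
    (hshift₁ : Measure.map (shiftK n) μ₁ = μ₁)
    (hshift₂ : Measure.map (shiftK n) μ₂ = μ₂)
    (hφinv₁ : ∀ t : ℝ, 0 ≤ t → Measure.map (φ t) μ₁ = μ₁)
    (hφinv₂ : ∀ t : ℝ, 0 ≤ t → Measure.map (φ t) μ₂ = μ₂)
    (u v : Kn n) (r : ℤ)
    -- `u` is in the support of `μ₁` and `v` is in the support of `μ₂`
    (hu : ∀ U : Set (Kn n), IsOpen U → u ∈ U → 0 < μ₁ U)
    (hv : ∀ U : Set (Kn n), IsOpen U → v ∈ U → 0 < μ₂ U)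
    (h0 : u.val 0 = v.val 0 + (r : ℝ))
    (h1 : u.val 1 = v.val 1 + (r : ℝ)) :
    ∀ j : ℤ, u.val j = v.val j + (r : ℝ) := by
  have hequ := support_equilibrium δ hδ V F hV hper htwist n φ hφ0 hφcont hφsol hFconst μ₁
    hshift₁ hφinv₁ u hu
  have heqv := support_equilibrium δ hδ V F hV hper htwist n φ hφ0 hφcont hφsol hFconst μ₂
    hshift₂ hφinv₂ v hv
  have ha : ∀ j : ℤ, V2 V (u.val (j-1)) (u.val j) + V1 V (u.val j) (u.val (j+1)) = F 0 := by
    intro j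
    have h := hequ j
    unfold fj at h
    linarith
  have hbeq : ∀ j : ℤ, V2 V (v.val (j-1) + (r:ℝ)) (v.val j + (r:ℝ))
      + V1 V (v.val j + (r:ℝ)) (v.val (j+1) + (r:ℝ)) = F 0 := by
    intro j
    have h := heqv j
    unfold fj at h
    rw [V2_per hper r, V1_per hper r]
    linarith
  exact equilibrium_unique hV hδ htwist (F 0) u.val (fun j => v.val j + (r:ℝ)) ha hbeq h0 h1
end

section
/- Assume F is constant. Let μ be a Borel probability measure on K_n invariant under the shift T and under φ(t,·) for every t ≥ 0, and let u belong to the support of μ. Define w ∈ ℝ^ℤ by w_j = −∂₂V(u_{j-1},u_j) − ∂₁V(u_j,u_{j+1}) + F. Then either w_j = 0 for all j ∈ ℤ, or w has no singular zero at any position j ∈ ℤ. -/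
open MeasureTheory Set Filter Topology

/-! ### Auxiliary lemmas -/

lemma uncurry_hasFDerivAt {V : ℝ → ℝ → ℝ} (hV : ContDiff ℝ 2 (Function.uncurry V)) (p : ℝ × ℝ) :
    HasFDerivAt (Function.uncurry V) (fderiv ℝ (Function.uncurry V) p) p :=
  ((hV.differentiable (by norm_num)) p).hasFDerivAt

lemma V1_eq_fderiv {V : ℝ → ℝ → ℝ} (hV : ContDiff ℝ 2 (Function.uncurry V)) (x y : ℝ) :
    V1 V x y = fderiv ℝ (Function.uncurry V) (x, y) (1, 0) := by
  have h1 : HasDerivAt (fun s : ℝ => (s, y)) ((1:ℝ), (0:ℝ)) x :=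
    (hasDerivAt_id x).prodMk (hasDerivAt_const x y)
  have h2 := (uncurry_hasFDerivAt hV (x, y)).comp_hasDerivAt x h1
  exact h2.deriv

lemma V2_eq_fderiv {V : ℝ → ℝ → ℝ} (hV : ContDiff ℝ 2 (Function.uncurry V)) (x y : ℝ) :
    V2 V x y = fderiv ℝ (Function.uncurry V) (x, y) (0, 1) := by
  have h1 : HasDerivAt (fun s : ℝ => (x, s)) ((0:ℝ), (1:ℝ)) y :=
    (hasDerivAt_const y x).prodMk (hasDerivAt_id y)
  have h2 := (uncurry_hasFDerivAt hV (x, y)).comp_hasDerivAt y h1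
  exact h2.deriv

lemma contV1 {V : ℝ → ℝ → ℝ} (hV : ContDiff ℝ 2 (Function.uncurry V)) :
    Continuous (fun p : ℝ × ℝ => V1 V p.1 p.2) := by
  have h : (fun p : ℝ × ℝ => V1 V p.1 p.2)
      = fun p : ℝ × ℝ => fderiv ℝ (Function.uncurry V) p ((1:ℝ), (0:ℝ)) := by
    funext p; exact V1_eq_fderiv hV p.1 p.2
  rw [h]
  exact (hV.continuous_fderiv (by norm_num)).clm_apply continuous_const

lemma contV2 {V : ℝ → ℝ → ℝ} (hV : ContDiff ℝ 2 (Function.uncurry V)) :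
    Continuous (fun p : ℝ × ℝ => V2 V p.1 p.2) := by
  have h : (fun p : ℝ × ℝ => V2 V p.1 p.2)
      = fun p : ℝ × ℝ => fderiv ℝ (Function.uncurry V) p ((0:ℝ), (1:ℝ)) := by
    funext p; exact V2_eq_fderiv hV p.1 p.2
  rw [h]
  exact (hV.continuous_fderiv (by norm_num)).clm_apply continuous_const

lemma fderiv_periodic {V : ℝ → ℝ → ℝ} (hV : ContDiff ℝ 2 (Function.uncurry V))
    (hper : ∀ x y : ℝ, V (x + 1) (y + 1) = V x y) (p : ℝ × ℝ) :
    fderiv ℝ (Function.uncurry V) (p + ((1:ℝ), (1:ℝ))) = fderiv ℝ (Function.uncurry V) p := by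
  have hT : HasFDerivAt (fun q : ℝ × ℝ => q + ((1:ℝ), (1:ℝ)))
      (ContinuousLinearMap.id ℝ (ℝ × ℝ)) p := (hasFDerivAt_id p).add_const _
  have h := (uncurry_hasFDerivAt hV (p + ((1:ℝ), (1:ℝ)))).comp p hT
  have heq : (Function.uncurry V) ∘ (fun q : ℝ × ℝ => q + ((1:ℝ), (1:ℝ)))
      = Function.uncurry V := by
    funext q; simpa [Function.uncurry] using hper q.1 q.2
  rw [heq] at h
  have h2 := h.fderiv
  simpa using h2.symm

/-- bound on the strip for diagonally periodic continuous functions -/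
lemma bound_on_strip (g : ℝ × ℝ → ℝ) (hg : Continuous g)
    (hgp : ∀ p : ℝ × ℝ, g (p + ((1:ℝ), (1:ℝ))) = g p) (n : ℕ) :
    ∃ W : ℝ, 0 ≤ W ∧ ∀ p : ℝ × ℝ, |p.2 - p.1| ≤ (n : ℝ) → |g p| ≤ W := by
  have hstep : ∀ (q : ℝ × ℝ) (r : ℝ), g (q + (r + 1, r + 1)) = g (q + (r, r)) := by
    intro q r
    have h : q + (r + 1, r + 1) = (q + (r, r)) + (1, 1) := by
      ext <;> simp <;> ring
    rw [h, hgp]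
  have hint : ∀ m : ℤ, ∀ p : ℝ × ℝ, g (p + ((m : ℝ), (m : ℝ))) = g p := by
    intro m
    induction m using Int.induction_on with
    | zero => intro p; simp; rw [show ((0:ℝ), (0:ℝ)) = (0 : ℝ × ℝ) from rfl, add_zero]
    | succ k ih =>
        intro p
        have hc : ((k + 1 : ℤ) : ℝ) = (k : ℝ) + 1 := by push_cast; ring
        rw [hc, hstep]; simpa using ih p
    | pred k ih =>
        intro p
        have hc : ((-k - 1 : ℤ) : ℝ) = (-(k : ℝ) - 1) := by push_cast; ring
        have hc2 : ((-k : ℤ) : ℝ) = (-(k:ℝ) - 1) + 1 := by push_cast; ring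
        have h2 := ih p
        rw [hc2, hstep] at h2
        rw [hc]; exact h2
  have hcomp : IsCompact (Icc ((0:ℝ), -(n:ℝ) - 1) ((1:ℝ), (n:ℝ) + 1)) := isCompact_Icc
  obtain ⟨C, hC⟩ := hcomp.exists_bound_of_continuousOn hg.continuousOn
  refine ⟨max C 0, le_max_right _ _, ?_⟩
  intro p hp
  have h1 := hint (-⌊p.1⌋) p
  have hc3 : ((-⌊p.1⌋ : ℤ) : ℝ) = -(⌊p.1⌋ : ℝ) := by push_cast; ring
  rw [hc3] at h1
  rw [← h1]
  have hf1 : (⌊p.1⌋ : ℝ) ≤ p.1 := Int.floor_le p.1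
  have hf2 : p.1 < (⌊p.1⌋ : ℝ) + 1 := Int.lt_floor_add_one p.1
  have habs := abs_le.1 hp
  have hmem : p + (-(⌊p.1⌋:ℝ), -(⌊p.1⌋:ℝ)) ∈ Icc ((0:ℝ), -(n:ℝ) - 1) ((1:ℝ), (n:ℝ) + 1) := by
    simp only [Set.mem_Icc, Prod.le_def, Prod.fst_add, Prod.snd_add]
    refine ⟨⟨by linarith, by linarith⟩, ⟨by linarith, by linarith⟩⟩
  calc |g (p + (-(⌊p.1⌋:ℝ), -(⌊p.1⌋:ℝ)))| ≤ C := by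
        simpa [Real.norm_eq_abs] using hC _ hmem
    _ ≤ max C 0 := le_max_left _ _

lemma integral_comp_eq {α : Type*} [MeasurableSpace α] [TopologicalSpace α]
    [BorelSpace α] (μ : Measure α) (f : α → α) (hf : Continuous f)
    (hinv : Measure.map f μ = μ) (g : α → ℝ) (hg : Continuous g) :
    ∫ v, g (f v) ∂μ = ∫ v, g v ∂μ := by
  conv_rhs => rw [← hinv]
  rw [integral_map hf.aemeasurable]
  rw [hinv]
  exact hg.aestronglyMeasurable

lemma quot_dct {α : Type*} [MeasurableSpace α] (μ : Measure α) [IsProbabilityMeasure μ]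
    (G : ℝ → α → ℝ) (D : α → ℝ) (M : ℝ)
    (hmeas : ∀ t : ℝ, 0 ≤ t → AEStronglyMeasurable (fun v => G t v - G 0 v) μ)
    (hGdiff : ∀ t : ℝ, 0 ≤ t → ∫ v, (G t v - G 0 v) ∂μ = 0)
    (hlip : ∀ v, ∀ t : ℝ, 0 ≤ t → |G t v - G 0 v| ≤ M * t)
    (hderiv : ∀ v, HasDerivWithinAt (fun t => G t v) (D v) (Set.Ici 0) 0) :
    ∫ v, D v ∂μ = 0 := by
  set t : ℕ → ℝ := fun k => 1 / ((k : ℝ) + 1) with ht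
  have htpos : ∀ k, 0 < t k := fun k => by positivity
  set Fk : ℕ → α → ℝ := fun k v => (G (t k) v - G 0 v) * ((k : ℝ) + 1) with hFk
  have hFint : ∀ k, ∫ v, Fk k v ∂μ = 0 := by
    intro k
    rw [hFk]
    simp only []
    rw [integral_mul_const, hGdiff (t k) (htpos k).le, zero_mul]
  have hFmeas : ∀ k, AEStronglyMeasurable (Fk k) μ :=
    fun k => (hmeas (t k) (htpos k).le).mul_const _
  have hbound : ∀ k, ∀ᵐ v ∂μ, ‖Fk k v‖ ≤ M := by
    intro k
    refine ae_of_all _ fun v => ?_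
    have h1 := hlip v (t k) (htpos k).le
    have h2 : |G (t k) v - G 0 v| * ((k:ℝ)+1) ≤ M * t k * ((k:ℝ)+1) := by
      apply mul_le_mul_of_nonneg_right h1; positivity
    have h3 : M * t k * ((k:ℝ)+1) = M := by
      rw [ht]; field_simp
    rw [Real.norm_eq_abs, hFk]
    simp only []
    rw [abs_mul, abs_of_pos (by positivity : (0:ℝ) < (k:ℝ)+1)]
    linarith
  have hlim : ∀ᵐ v ∂μ, Tendsto (fun k => Fk k v) atTop (𝓝 (D v)) := by
    refine ae_of_all _ fun v => ?_
    have hslope := (hasDerivWithinAt_iff_tendsto_slope).1 (hderiv v)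
    have hIoi : (Set.Ici (0:ℝ)) \ {0} = Set.Ioi 0 := by
      ext x; simp [lt_iff_le_and_ne, eq_comm, and_comm]
    rw [hIoi] at hslope
    have htt : Tendsto t atTop (𝓝[>] (0:ℝ)) := by
      apply tendsto_nhdsWithin_of_tendsto_nhds_of_eventually_within
      · exact tendsto_one_div_add_atTop_nhds_zero_nat
      · exact Eventually.of_forall fun k => htpos k
    have hcomp := hslope.comp htt
    refine hcomp.congr fun k => ?_
    show slope (fun s => G s v) 0 (t k) = Fk k v
    rw [slope_def_field, hFk]
    simp only []
    rw [sub_zero, ht]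
    simp only []
    field_simp
  have hDCT := tendsto_integral_of_dominated_convergence (fun _ => M) hFmeas
    (integrable_const M) hbound hlim
  simp only [hFint] at hDCT
  exact tendsto_nhds_unique hDCT tendsto_const_nhds

lemma arctan_lip (x y : ℝ) : |Real.arctan y - Real.arctan x| ≤ |y - x| := by
  have h := Convex.norm_image_sub_le_of_norm_hasDerivWithin_le
    (f := Real.arctan) (f' := fun z => 1 / (1 + z ^ 2)) (C := 1) (s := Set.univ)
    (fun z _ => (Real.hasDerivAt_arctan z).hasDerivWithinAt)
    (fun z _ => by
      rw [Real.norm_eq_abs, abs_of_pos (by positivity)]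
      rw [div_le_one (by positivity)]
      nlinarith [sq_nonneg z])
    convex_univ (Set.mem_univ x) (Set.mem_univ y)
  simpa [Real.norm_eq_abs] using h

lemma strip_convex (n : ℕ) : Convex ℝ {p : ℝ × ℝ | |p.2 - p.1| ≤ (n : ℝ)} := by
  intro p hp q hq a b ha hb hab
  simp only [Set.mem_setOf_eq] at *
  have h1 : (a • p + b • q).2 - (a • p + b • q).1 = a * (p.2 - p.1) + b * (q.2 - q.1) := by
    simp [Prod.smul_fst, Prod.smul_snd, smul_eq_mul]; ring
  rw [h1]
  calc |a * (p.2 - p.1) + b * (q.2 - q.1)| ≤ |a * (p.2 - p.1)| + |b * (q.2 - q.1)| := abs_add_le _ _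
    _ = a * |p.2 - p.1| + b * |q.2 - q.1| := by
        rw [abs_mul, abs_mul, abs_of_nonneg ha, abs_of_nonneg hb]
    _ ≤ a * n + b * n := by gcongr
    _ = n := by rw [← add_mul, hab, one_mul]

/-- The driving force field `w`. -/
noncomputable def wfun (V : ℝ → ℝ → ℝ) (c : ℝ) (x : ℤ → ℝ) (j : ℤ) : ℝ :=
  -(V2 V (x (j - 1)) (x j)) - V1 V (x j) (x (j + 1)) + c

theorem support_derivative_no_singular_zero
    (δ : ℝ) (hδ : 0 < δ) (V : ℝ → ℝ → ℝ) (F : ℝ → ℝ)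
    (hV : ContDiff ℝ 2 (Function.uncurry V))
    (hper : ∀ x y : ℝ, V (x + 1) (y + 1) = V x y)
    (htwist : ∀ x y : ℝ, V12 V x y ≤ -δ)
    (hF : Continuous F)
    (n : ℕ) (φ : ℝ → Kn n → Kn n)
    (hφ0 : φ 0 = id)
    (hφadd : ∀ s t : ℝ, 0 ≤ s → 0 ≤ t → φ (s + t) = φ s ∘ φ t)
    (hφcont : ∀ t : ℝ, 0 ≤ t → Continuous (φ t))
    (hφsol : ∀ u : Kn n, ∀ j : ℤ, ∀ t : ℝ, 0 ≤ t →
      HasDerivWithinAt (fun s => (φ s u).val j)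
        (-(V2 V ((φ t u).val (j - 1)) ((φ t u).val j)) -
          V1 V ((φ t u).val j) ((φ t u).val (j + 1)) + F t)
        (Set.Ici (0 : ℝ)) t)
    (hφshift : ∀ t : ℝ, 0 ≤ t → ∀ u : Kn n, φ t (shiftK n u) = shiftK n (φ t u))
    (hFconst : ∀ t t' : ℝ, F t = F t')
    (μ : Measure (Kn n)) [IsProbabilityMeasure μ]
    (hshift : Measure.map (shiftK n) μ = μ)
    (hφinv : ∀ t : ℝ, 0 ≤ t → Measure.map (φ t) μ = μ)
    (u : Kn n)
    -- `u` is in the support of `μ`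
    (hu : ∀ U : Set (Kn n), IsOpen U → u ∈ U → 0 < μ U) :
    (∀ j : ℤ, -(V2 V (u.val (j - 1)) (u.val j)) - V1 V (u.val j) (u.val (j + 1)) + F 0 = 0) ∨
    (∀ j : ℤ, ¬ singZeroAt
      (fun i => -(V2 V (u.val (i - 1)) (u.val i)) - V1 V (u.val i) (u.val (i + 1)) + F 0) j) := by
  classical
  set c := F 0 with hc
  -- boundedness of V1, V2, fderiv on the strip
  obtain ⟨W1, hW1nn, hW1⟩ := bound_on_strip (fun p => V1 V p.1 p.2) (contV1 hV)
    (fun p => by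
      simp only [Prod.fst_add, Prod.snd_add]
      rw [V1_eq_fderiv hV, V1_eq_fderiv hV]
      rw [show ((p.1 + 1 : ℝ), (p.2 + 1 : ℝ)) = p + ((1:ℝ), (1:ℝ)) by ext <;> simp]
      rw [fderiv_periodic hV hper p]) n
  obtain ⟨W2, hW2nn, hW2⟩ := bound_on_strip (fun p => V2 V p.1 p.2) (contV2 hV)
    (fun p => by
      simp only [Prod.fst_add, Prod.snd_add]
      rw [V2_eq_fderiv hV, V2_eq_fderiv hV]
      rw [show ((p.1 + 1 : ℝ), (p.2 + 1 : ℝ)) = p + ((1:ℝ), (1:ℝ)) by ext <;> simp]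
      rw [fderiv_periodic hV hper p]) n
  obtain ⟨Wf, hWfnn, hWf⟩ := bound_on_strip (fun p => ‖fderiv ℝ (Function.uncurry V) p‖)
    ((hV.continuous_fderiv (by norm_num)).norm)
    (fun p => by rw [fderiv_periodic hV hper p]) n
  obtain ⟨WV, hWVnn, hWV⟩ := bound_on_strip (Function.uncurry V) hV.continuous
    (fun p => by simpa [Function.uncurry] using hper p.1 p.2) n
  set Wb : ℝ := W1 + W2 + |c| with hWb
  -- strip membership of consecutive pairs
  have hstrip : ∀ (v : Kn n) (j : ℤ), |v.val (j + 1) - v.val j| ≤ (n : ℝ) := fun v j => v.2 j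
  have hstrip' : ∀ (v : Kn n) (j : ℤ), |v.val j - v.val (j - 1)| ≤ (n : ℝ) := by
    intro v j
    have h := v.2 (j - 1)
    rwa [show j - 1 + 1 = j by ring] at h
  -- bound on w
  have hwb : ∀ (v : Kn n) (j : ℤ), |wfun V c v.val j| ≤ Wb := by
    intro v j
    have h1 := hW2 (v.val (j - 1), v.val j) (by simpa using hstrip' v j)
    have h2 := hW1 (v.val j, v.val (j + 1)) (by simpa using hstrip v j)
    simp only at h1 h2
    have h3 : wfun V c v.val j = -(V2 V (v.val (j-1)) (v.val j)) + (-(V1 V (v.val j) (v.val (j+1)))) + c := by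
      rw [wfun]; ring
    rw [h3]
    calc |(-(V2 V (v.val (j-1)) (v.val j))) + (-(V1 V (v.val j) (v.val (j+1)))) + c|
        ≤ |(-(V2 V (v.val (j-1)) (v.val j)))| + |(-(V1 V (v.val j) (v.val (j+1))))| + |c| :=
          abs_add_three _ _ _
      _ ≤ W2 + W1 + |c| := by rw [abs_neg, abs_neg]; gcongr
      _ = Wb := by rw [hWb]; ring
  -- the flow solves the equation, expressed via wfun
  have hderiv_w : ∀ (v : Kn n) (j : ℤ) (t : ℝ), 0 ≤ t →
      HasDerivWithinAt (fun s => (φ s v).val j) (wfun V c ((φ t v).val) j) (Set.Ici 0) t := by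
    intro v j t ht
    have h := hφsol v j t ht
    rw [hFconst t 0] at h
    exact h
  -- Lipschitz bound on coordinates along the flow
  have hlipcoord : ∀ (v : Kn n) (j : ℤ) (t : ℝ), 0 ≤ t →
      |(φ t v).val j - v.val j| ≤ Wb * t := by
    intro v j t ht
    have key := Convex.norm_image_sub_le_of_norm_hasDerivWithin_le
      (f := fun s => (φ s v).val j) (f' := fun s => wfun V c ((φ s v).val) j)
      (s := Set.Icc 0 t) (C := Wb)
      (fun s hs => (hderiv_w v j s hs.1).mono Set.Icc_subset_Ici_self)
      (fun s _ => by simpa [Real.norm_eq_abs] using hwb (φ s v) j)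
      (convex_Icc 0 t) ⟨le_rfl, ht⟩ ⟨ht, le_rfl⟩
    simp only [hφ0, id_eq, Real.norm_eq_abs, sub_zero] at key
    calc |(φ t v).val j - v.val j| ≤ Wb * |t| := key
      _ = Wb * t := by rw [abs_of_nonneg ht]
  
  -- continuity of coordinates and of w
  have contCoord : ∀ j : ℤ, Continuous (fun v : Kn n => v.val j) :=
    fun j => (continuous_apply j).comp continuous_subtype_val
  have contW : ∀ j : ℤ, Continuous (fun v : Kn n => wfun V c v.val j) := by
    intro j
    have h2 : Continuous (fun v : Kn n => V2 V (v.val (j-1)) (v.val j)) :=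
      (contV2 hV).comp ((contCoord (j-1)).prodMk (contCoord j))
    have h1 : Continuous (fun v : Kn n => V1 V (v.val j) (v.val (j+1))) :=
      (contV1 hV).comp ((contCoord j).prodMk (contCoord (j+1)))
    exact ((h2.neg.sub h1).add continuous_const)
  -- integrability of bounded continuous functions
  have intBdd : ∀ (g : Kn n → ℝ) (Mg : ℝ), Continuous g → (∀ x, |g x| ≤ Mg) →
      Integrable g μ := by
    intro g Mg hg hb
    exact (integrable_const Mg).mono' hg.aestronglyMeasurable
      (ae_of_all _ fun v => by simpa [Real.norm_eq_abs] using hb v)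
  -- Step 1: the mean velocity vanishes
  have hmean : ∫ v, wfun V c v.val 0 ∂μ = 0 := by
    have hm : ∀ m : ℕ, ∫ v, (1 / (1 + (v.val 0 / ((m:ℝ)+1))^2) * wfun V c v.val 0) ∂μ = 0 := by
      intro m
      set θ : ℝ → ℝ := fun x => ((m:ℝ)+1) * Real.arctan (x / ((m:ℝ)+1)) with hθdef
      have hθcont : Continuous θ := by
        exact continuous_const.mul (Real.continuous_arctan.comp (continuous_id.div_const _))
      have hθbdd : ∀ x, |θ x| ≤ ((m:ℝ)+1) * (Real.pi/2) := by
        intro x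
        have harct : |Real.arctan (x / ((m:ℝ)+1))| ≤ Real.pi/2 := by
          rw [abs_le]
          constructor
          · linarith [Real.neg_pi_div_two_lt_arctan (x / ((m:ℝ)+1))]
          · linarith [Real.arctan_lt_pi_div_two (x / ((m:ℝ)+1))]
        rw [hθdef]
        simp only []
        rw [abs_mul, abs_of_pos (show (0:ℝ) < (m:ℝ)+1 by positivity)]
        exact mul_le_mul_of_nonneg_left harct (by positivity)
      have hθlip : ∀ x y : ℝ, |θ y - θ x| ≤ |y - x| := by
        intro x y
        rw [hθdef]
        simp only []
        rw [← mul_sub, abs_mul, abs_of_pos (by positivity : (0:ℝ) < (m:ℝ)+1)]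
        have h := arctan_lip (x / ((m:ℝ)+1)) (y / ((m:ℝ)+1))
        calc ((m:ℝ)+1) * |Real.arctan (y/((m:ℝ)+1)) - Real.arctan (x/((m:ℝ)+1))|
            ≤ ((m:ℝ)+1) * |y/((m:ℝ)+1) - x/((m:ℝ)+1)| := by gcongr
          _ = |y - x| := by
              rw [div_sub_div_same, abs_div, abs_of_pos (by positivity : (0:ℝ) < (m:ℝ)+1)]
              field_simp
      have := quot_dct μ (fun t v => θ ((φ t v).val 0))
        (fun v => (1 / (1 + (v.val 0 / ((m:ℝ)+1))^2)) * wfun V c v.val 0) Wb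
        ?_ ?_ ?_ ?_
      · exact this
      · intro t ht
        exact ((hθcont.comp ((contCoord 0).comp (hφcont t ht))).sub
          (hθcont.comp ((contCoord 0).comp (hφcont 0 le_rfl)))).aestronglyMeasurable
      · intro t ht
        have hint1 : Integrable (fun v => θ ((φ t v).val 0)) μ :=
          intBdd _ _ (hθcont.comp ((contCoord 0).comp (hφcont t ht))) (fun v => hθbdd _)
        have hint0 : Integrable (fun v => θ ((φ 0 v).val 0)) μ :=
          intBdd _ _ (hθcont.comp ((contCoord 0).comp (hφcont 0 le_rfl))) (fun v => hθbdd _)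
        rw [integral_sub hint1 hint0]
        have he1 : ∫ v, θ ((φ t v).val 0) ∂μ = ∫ v, θ (v.val 0) ∂μ :=
          integral_comp_eq μ (φ t) (hφcont t ht) (hφinv t ht) (fun v => θ (v.val 0))
            (hθcont.comp (contCoord 0))
        have he0 : ∫ v, θ ((φ 0 v).val 0) ∂μ = ∫ v, θ (v.val 0) ∂μ := by
          simp only [hφ0, id_eq]
        rw [he1, he0, sub_self]
      · intro v t ht
        calc |θ ((φ t v).val 0) - θ ((φ 0 v).val 0)|
            ≤ |(φ t v).val 0 - (φ 0 v).val 0| := hθlip _ _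
          _ ≤ Wb * t := by
              rw [hφ0]
              exact hlipcoord v 0 t ht
      · intro v
        have hin : HasDerivWithinAt (fun t => (φ t v).val 0) (wfun V c v.val 0)
            (Set.Ici 0) 0 := by
          have h := hderiv_w v 0 0 le_rfl
          rwa [hφ0] at h
        set x0 : ℝ := v.val 0 with hx0
        have h1 : HasDerivAt (fun x : ℝ => x / ((m:ℝ)+1)) (1/((m:ℝ)+1)) x0 := by
          simpa using (hasDerivAt_id x0).div_const ((m:ℝ)+1)
        have h2 := (Real.hasDerivAt_arctan (x0/((m:ℝ)+1))).comp x0 h1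
        have h3 := h2.const_mul ((m:ℝ)+1)
        have h4 := h3.comp_hasDerivWithinAt_of_eq 0 hin (by show x0 = ((φ 0 v).val 0); rw [hφ0]; rfl)
        have heq : ((m:ℝ)+1) * (1 / (1 + (x0/((m:ℝ)+1))^2) * (1/((m:ℝ)+1))) * wfun V c v.val 0
            = 1 / (1 + (v.val 0 / ((m:ℝ)+1))^2) * wfun V c v.val 0 := by
          rw [← hx0]
          have : ((m:ℝ)+1) ≠ 0 := by positivity
          field_simp
        rwa [heq] at h4
    -- let m → ∞
    have hlim : Tendsto (fun m : ℕ => ∫ v, (1 / (1 + (v.val 0 / ((m:ℝ)+1))^2) * wfun V c v.val 0) ∂μ)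
        atTop (𝓝 (∫ v, wfun V c v.val 0 ∂μ)) := by
      apply tendsto_integral_of_dominated_convergence (fun _ => Wb)
      · intro m
        refine Continuous.aestronglyMeasurable ?_
        have : Continuous (fun v : Kn n => 1 / (1 + (v.val 0 / ((m:ℝ)+1))^2)) := by
          apply continuous_const.div
          · exact continuous_const.add (((contCoord 0).div_const _).pow 2)
          · intro v; positivity
        exact this.mul (contW 0)
      · exact integrable_const Wb
      · intro m
        refine ae_of_all _ fun v => ?_
        rw [Real.norm_eq_abs, abs_mul]
        have h1 : |1 / (1 + (v.val 0 / ((m:ℝ)+1))^2)| ≤ 1 := by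
          rw [abs_of_pos (by positivity)]
          rw [div_le_one (by positivity)]
          nlinarith [sq_nonneg (v.val 0 / ((m:ℝ)+1))]
        calc |1 / (1 + (v.val 0 / ((m:ℝ)+1))^2)| * |wfun V c v.val 0|
            ≤ 1 * Wb := by
              apply mul_le_mul h1 (hwb v 0) (abs_nonneg _) zero_le_one
          _ = Wb := one_mul Wb
      · refine ae_of_all _ fun v => ?_
        have h0 : Tendsto (fun m : ℕ => v.val 0 / ((m:ℝ)+1)) atTop (𝓝 0) := by
          have := tendsto_one_div_add_atTop_nhds_zero_nat.const_mul (v.val 0)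
          simpa [div_eq_mul_inv, one_div, mul_comm] using this
        have hg : Continuous (fun z : ℝ => 1 / (1 + z^2)) := by
          apply continuous_const.div
          · exact continuous_const.add (continuous_pow 2)
          · intro z; positivity
        have h2 : Tendsto (fun m : ℕ => 1 / (1 + (v.val 0 / ((m:ℝ)+1))^2)) atTop (𝓝 1) := by
          have := (hg.tendsto 0).comp h0
          simpa [Function.comp_def] using this
        have := h2.mul_const (wfun V c v.val 0)
        simpa using this
    simp only [hm] at hlim
    exact tendsto_nhds_unique hlim tendsto_const_nhds
  
  -- Step 2: energy identity
  have hmemstrip : ∀ v : Kn n, |( (v.val 0, v.val 1) : ℝ × ℝ).2 - (v.val 0, v.val 1).1| ≤ (n:ℝ) := by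
    intro v
    simpa using hstrip v 0
  have hEn : ∫ v, (wfun V c v.val 0 * V1 V (v.val 0) (v.val 1)
      + wfun V c v.val 1 * V2 V (v.val 0) (v.val 1)) ∂μ = 0 := by
    have contE : Continuous (fun v : Kn n => Function.uncurry V (v.val 0, v.val 1)) :=
      hV.continuous.comp ((contCoord 0).prodMk (contCoord 1))
    have bddE : ∀ v : Kn n, |Function.uncurry V (v.val 0, v.val 1)| ≤ WV :=
      fun v => hWV _ (hmemstrip v)
    apply quot_dct μ (fun t v => Function.uncurry V (((φ t v).val 0, (φ t v).val 1)))
      (fun v => wfun V c v.val 0 * V1 V (v.val 0) (v.val 1)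
        + wfun V c v.val 1 * V2 V (v.val 0) (v.val 1)) (Wf * Wb)
    · intro t ht
      exact ((contE.comp (hφcont t ht)).sub (contE.comp (hφcont 0 le_rfl))).aestronglyMeasurable
    · intro t ht
      have hint1 : Integrable (fun v => Function.uncurry V (((φ t v).val 0, (φ t v).val 1))) μ :=
        intBdd _ WV (contE.comp (hφcont t ht)) (fun v => bddE (φ t v))
      have hint0 : Integrable (fun v => Function.uncurry V (((φ 0 v).val 0, (φ 0 v).val 1))) μ :=
        intBdd _ WV (contE.comp (hφcont 0 le_rfl)) (fun v => bddE (φ 0 v))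
      rw [integral_sub hint1 hint0]
      have he1 := integral_comp_eq μ (φ t) (hφcont t ht) (hφinv t ht)
        (fun v => Function.uncurry V (v.val 0, v.val 1)) contE
      have he0 : ∫ v, Function.uncurry V (((φ 0 v).val 0, (φ 0 v).val 1)) ∂μ
          = ∫ v, Function.uncurry V ((v.val 0, v.val 1)) ∂μ := by
        simp only [hφ0, id_eq]
      rw [he1, he0, sub_self]
    · intro v t ht
      have hdiff : ∀ q ∈ {p : ℝ × ℝ | |p.2 - p.1| ≤ (n:ℝ)}, DifferentiableAt ℝ (Function.uncurry V) q :=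
        fun q _ => (hV.differentiable (by norm_num)) q
      have hbound : ∀ q ∈ {p : ℝ × ℝ | |p.2 - p.1| ≤ (n:ℝ)}, ‖fderiv ℝ (Function.uncurry V) q‖ ≤ Wf := by
        intro q hq
        have := hWf q hq
        rwa [abs_of_nonneg (norm_nonneg _)] at this
      have key := Convex.norm_image_sub_le_of_norm_fderiv_le hdiff hbound (strip_convex n)
        (x := (((φ 0 v).val 0, (φ 0 v).val 1) : ℝ × ℝ))
        (y := (((φ t v).val 0, (φ t v).val 1) : ℝ × ℝ))
        (hmemstrip (φ 0 v)) (hmemstrip (φ t v))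
      have hnorm : ‖(( ((φ t v).val 0, (φ t v).val 1) : ℝ × ℝ)
          - (((φ 0 v).val 0, (φ 0 v).val 1) : ℝ × ℝ))‖ ≤ Wb * t := by
        rw [Prod.mk_sub_mk, Prod.norm_def]
        apply max_le
        · rw [Real.norm_eq_abs, hφ0]
          exact hlipcoord v 0 t ht
        · rw [Real.norm_eq_abs, hφ0]
          exact hlipcoord v 1 t ht
      calc |Function.uncurry V (((φ t v).val 0, (φ t v).val 1))
            - Function.uncurry V (((φ 0 v).val 0, (φ 0 v).val 1))|
          ≤ Wf * ‖(( ((φ t v).val 0, (φ t v).val 1) : ℝ × ℝ)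
            - (((φ 0 v).val 0, (φ 0 v).val 1) : ℝ × ℝ))‖ := by
            simpa [Real.norm_eq_abs] using key
        _ ≤ Wf * (Wb * t) := mul_le_mul_of_nonneg_left hnorm hWfnn
        _ = Wf * Wb * t := by ring
    · intro v
      have hin0 : HasDerivWithinAt (fun t => (φ t v).val 0) (wfun V c v.val 0) (Set.Ici 0) 0 := by
        have h := hderiv_w v 0 0 le_rfl; rwa [hφ0] at h
      have hin1 : HasDerivWithinAt (fun t => (φ t v).val 1) (wfun V c v.val 1) (Set.Ici 0) 0 := by
        have h := hderiv_w v 1 0 le_rfl; rwa [hφ0] at h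
      have hpair := hin0.prodMk hin1
      have hfd := uncurry_hasFDerivAt hV ((v.val 0, v.val 1))
      have hcomp := hfd.comp_hasDerivWithinAt_of_eq 0 hpair
        (by show ((v.val 0, v.val 1) : ℝ × ℝ) = ((φ 0 v).val 0, (φ 0 v).val 1); rw [hφ0]; rfl)
      have hlin : fderiv ℝ (Function.uncurry V) ((v.val 0, v.val 1))
            ((wfun V c v.val 0, wfun V c v.val 1))
          = wfun V c v.val 0 * V1 V (v.val 0) (v.val 1)
            + wfun V c v.val 1 * V2 V (v.val 0) (v.val 1) := by
        have hsplit : ((wfun V c v.val 0, wfun V c v.val 1) : ℝ × ℝ)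
            = wfun V c v.val 0 • ((1:ℝ), (0:ℝ)) + wfun V c v.val 1 • ((0:ℝ), (1:ℝ)) := by
          ext <;> simp
        rw [hsplit, map_add, _root_.map_smul, _root_.map_smul, smul_eq_mul, smul_eq_mul,
          ← V1_eq_fderiv hV, ← V2_eq_fderiv hV]
      rw [hlin] at hcomp
      exact hcomp
  -- the shift map is continuous
  have shiftCont : Continuous (shiftK n) := by
    apply Continuous.subtype_mk
    exact continuous_pi fun i => (continuous_apply (i - 1)).comp continuous_subtype_val
  -- shift equivariance of w
  have wshift : ∀ (x : ℤ → ℝ) (j : ℤ), wfun V c (shift x) j = wfun V c x (j - 1) := by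
    intro x j
    simp only [wfun, shift]
    rw [show j + 1 - 1 = j - 1 + 1 by ring]
  -- integrable building blocks
  have intA : Integrable (fun v : Kn n => wfun V c v.val 0 * V1 V (v.val 0) (v.val 1)) μ := by
    apply intBdd _ (Wb * W1)
      ((contW 0).mul ((contV1 hV).comp ((contCoord 0).prodMk (contCoord 1))))
    intro v
    simp only [Pi.mul_apply, Function.comp_apply]
    rw [abs_mul]
    exact mul_le_mul (hwb v 0) (hW1 _ (hmemstrip v)) (abs_nonneg _) (le_trans (abs_nonneg _) (hwb v 0))
  have intB : Integrable (fun v : Kn n => wfun V c v.val 1 * V2 V (v.val 0) (v.val 1)) μ := by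
    apply intBdd _ (Wb * W2)
      ((contW 1).mul ((contV2 hV).comp ((contCoord 0).prodMk (contCoord 1))))
    intro v
    simp only [Pi.mul_apply, Function.comp_apply]
    rw [abs_mul]
    exact mul_le_mul (hwb v 1) (hW2 _ (hmemstrip v)) (abs_nonneg _) (le_trans (abs_nonneg _) (hwb v 1))
  -- Step 3: move the V2-term by the shift
  have hB : ∫ v, wfun V c v.val 1 * V2 V (v.val 0) (v.val 1) ∂μ
      = ∫ v, wfun V c v.val 0 * V2 V (v.val (0 - 1)) (v.val 0) ∂μ := by
    have h := integral_comp_eq μ (shiftK n) shiftCont hshift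
      (fun v => wfun V c v.val 1 * V2 V (v.val 0) (v.val 1))
      ((contW 1).mul ((contV2 hV).comp ((contCoord 0).prodMk (contCoord 1))))
    rw [← h]
    congr 1
  -- Step 4: combine into ∫ w₀² = 0
  have hsq : ∫ v, (wfun V c v.val 0)^2 ∂μ = 0 := by
    have intB' : Integrable (fun v : Kn n => wfun V c v.val 0 * V2 V (v.val (0 - 1)) (v.val 0)) μ := by
      apply intBdd _ (Wb * W2)
        ((contW 0).mul ((contV2 hV).comp ((contCoord (0 - 1)).prodMk (contCoord 0))))
      intro v
      simp only [Pi.mul_apply, Function.comp_apply]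
      rw [abs_mul]
      exact mul_le_mul (hwb v 0) (hW2 (v.val (0 - 1), v.val 0) (by simpa using hstrip' v 0)) (abs_nonneg _)
        (le_trans (abs_nonneg _) (hwb v 0))
    have hsum : ∫ v, (wfun V c v.val 0 * V1 V (v.val 0) (v.val 1)
        + wfun V c v.val 0 * V2 V (v.val (0 - 1)) (v.val 0)) ∂μ = 0 := by
      rw [integral_add intA intB']
      rw [integral_add intA intB] at hEn
      rw [hB] at hEn
      exact hEn
    have hrw : (fun v : Kn n => wfun V c v.val 0 * V1 V (v.val 0) (v.val 1)
        + wfun V c v.val 0 * V2 V (v.val (0 - 1)) (v.val 0))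
        = fun v : Kn n => c * wfun V c v.val 0 - (wfun V c v.val 0)^2 := by
      funext v
      have hw0 : wfun V c v.val 0
          = -(V2 V (v.val (0 - 1)) (v.val 0)) - V1 V (v.val 0) (v.val 1) + c := by
        simp only [wfun]
        norm_num
      rw [hw0]
      ring
    rw [hrw] at hsum
    have intCw : Integrable (fun v : Kn n => c * wfun V c v.val 0) μ :=
      (intBdd _ Wb (contW 0) (fun v => hwb v 0)).const_mul c
    have intSq : Integrable (fun v : Kn n => (wfun V c v.val 0)^2) μ := by
      apply intBdd _ (Wb^2) ((contW 0).pow 2)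
      intro v
      simp only [Pi.pow_apply]
      rw [abs_of_nonneg (sq_nonneg _), ← sq_abs (wfun V c v.val 0)]
      exact pow_le_pow_left₀ (abs_nonneg _) (hwb v 0) 2
    rw [integral_sub intCw intSq, integral_const_mul, hmean, mul_zero, zero_sub,
      neg_eq_zero] at hsum
    exact hsum
  -- Step 5: all coordinates
  have hstep5 : ∀ j : ℤ, ∫ v, (wfun V c v.val (j - 1))^2 ∂μ = ∫ v, (wfun V c v.val j)^2 ∂μ := by
    intro j
    have h := integral_comp_eq μ (shiftK n) shiftCont hshift
      (fun v => (wfun V c v.val j)^2) ((contW j).pow 2)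
    rw [← h]
    congr 1
    funext v
    show (wfun V c v.val (j - 1))^2 = (wfun V c (shift v.val) j)^2
    rw [wshift]
  have hallj : ∀ j : ℤ, ∫ v, (wfun V c v.val j)^2 ∂μ = 0 := by
    intro j
    induction j using Int.induction_on with
    | zero => exact hsq
    | succ k ih =>
        have h := hstep5 ((k:ℤ) + 1)
        rw [show ((k:ℤ) + 1 - 1) = (k:ℤ) by ring] at h
        rw [← h]
        exact ih
    | pred k ih =>
        have h := hstep5 (-(k:ℤ))
        rw [h]
        exact ih
  -- Step 6: conclude pointwise on the support
  left
  intro j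
  by_contra hne
  have hU : IsOpen {v : Kn n | wfun V c v.val j ≠ 0} := by
    have : {v : Kn n | wfun V c v.val j ≠ 0}
        = (fun v : Kn n => wfun V c v.val j) ⁻¹' ({0}ᶜ) := rfl
    rw [this]
    exact (isOpen_compl_singleton).preimage (contW j)
  have hmem : u ∈ {v : Kn n | wfun V c v.val j ≠ 0} := hne
  have hpos := hu _ hU hmem
  have intSq : Integrable (fun v : Kn n => (wfun V c v.val j)^2) μ := by
    apply intBdd _ (Wb^2) ((contW j).pow 2)
    intro v
    simp only [Pi.pow_apply]
    rw [abs_of_nonneg (sq_nonneg _), ← sq_abs (wfun V c v.val j)]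
    exact pow_le_pow_left₀ (abs_nonneg _) (hwb v j) 2
  have hae := (integral_eq_zero_iff_of_nonneg (fun v => sq_nonneg _) intSq).1 (hallj j)
  have hnull : μ {v : Kn n | wfun V c v.val j ≠ 0} = 0 := by
    have h2 : ∀ᵐ v ∂μ, (wfun V c v.val j)^2 = 0 := hae
    have h3 : μ {v : Kn n | ¬ ((wfun V c v.val j)^2 = 0)} = 0 := by
      exact h2
    apply measure_mono_null _ h3
    intro v hv
    simp only [Set.mem_setOf_eq] at *
    intro hcontra
    exact hv (sq_eq_zero_iff.mp hcontra)
  rw [hnull] at hpos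
  exact lt_irrefl 0 hpos
end
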